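/- arXiv:1006.4853 — 7 statements merged into one kernel-verified Lean document; each statement's English description precedes it below -/
import Mathlib

section
/- Let F = F(X) be a free group, let w be a cyclic word over X ∪ X⁻¹, and let τ be a Whitehead automorphism of F of the second kind with multiplier a such that neither a nor a⁻¹ appears in w. Then either τ(w) = w (as cyclic words) or the length of τ(w) is strictly greater than the length of w. -/
open FreeGroup

/-- The length of a cyclic word (conjugacy class): the minimal word length of a representative. -/
noncomputable def cycLen {X : Type} [DecidableEq X] (c : ConjClasses (FreeGroup X)) : ℕ :=
  sInf {n | ∃ g : FreeGroup X, ConjClasses.mk g = c ∧ (FreeGroup.toWord g).length = n}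

/-- An element of a free group is cyclically reduced if its first letter is not
the inverse of its last letter. -/
def IsCycRed {X : Type} [DecidableEq X] (g : FreeGroup X) : Prop :=
  ∀ x : X × Bool, (FreeGroup.toWord g).head? = some x →
    (FreeGroup.toWord g).getLast? ≠ some (x.1, !x.2)

/-- The set `L(c)` of letters of `X` occurring (up to inversion) in the cyclic word `c`. -/
def usedLetters {X : Type} [DecidableEq X] (c : ConjClasses (FreeGroup X)) : Set X :=
  {x | ∃ g : FreeGroup X, ConjClasses.mk g = c ∧ IsCycRed g ∧ ∃ b : Bool, (x, b) ∈ FreeGroup.toWord g}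

/-- The action of an automorphism of the free group on cyclic words (conjugacy classes). -/
def actC {X : Type} (φ : FreeGroup X ≃* FreeGroup X) (c : ConjClasses (FreeGroup X)) :
    ConjClasses (FreeGroup X) :=
  ConjClasses.map (φ : FreeGroup X →* FreeGroup X) c

/-- `τ` is a Whitehead automorphism of the second kind with multiplier `a ∈ X ∪ X⁻¹`. -/
def IsWhiteheadMult {X : Type} (a : X × Bool) (τ : FreeGroup X ≃* FreeGroup X) : Prop :=
  ∀ x : X, τ (of x) ∈ ({of x, of x * FreeGroup.mk [a],
      (FreeGroup.mk [a])⁻¹ * of x, (FreeGroup.mk [a])⁻¹ * of x * FreeGroup.mk [a]} :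
      Set (FreeGroup X))

/-- `τ` is a relabeling automorphism: it permutes the set `X ∪ X⁻¹`. -/
def IsRelabeling {X : Type} (τ : FreeGroup X ≃* FreeGroup X) : Prop :=
  ∀ x : X, ∃ y : X × Bool, τ (of x) = FreeGroup.mk [y]

/-- Whitehead automorphisms. -/
def IsWhitehead {X : Type} (τ : FreeGroup X ≃* FreeGroup X) : Prop :=
  IsRelabeling τ ∨ ∃ a : X × Bool, IsWhiteheadMult a τ

/-!
Let `ℓ₁ ⋯ ℓₙ` be a cyclically reduced representative of `w`. Writing
`τ ℓ = a^(-γ ℓ) ℓ a^(δ ℓ)` with `γ ℓ, δ ℓ ∈ {0, 1}`, the cyclic word `τ w` is represented by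
`ℓ₁ a^(δ ℓ₁ - γ ℓ₂) ℓ₂ ⋯ ℓₙ a^(δ ℓₙ - γ ℓ₁)`, where each inserted power is `1` or `a^(±1)`.
Since no `ℓᵢ` involves `a`, nothing cancels, even cyclically, so this word is cyclically
reduced and hence of minimal length in its conjugacy class. Either nothing was inserted, and
`τ w = w`, or the word is strictly longer than `ℓ₁ ⋯ ℓₙ`.
-/

open List

namespace FreeGroup

variable {X : Type}

theorem isCyclicallyReduced_cons_iff {ℓ : X × Bool} {r : List (X × Bool)} :
    IsCyclicallyReduced (ℓ :: r) ↔ IsReduced (ℓ :: r ++ [ℓ]) := by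
  rw [isCyclicallyReduced_iff, IsReduced, IsReduced, isChain_append]
  simp

section Twist

variable (a : X × Bool) (γ δ : X × Bool → Bool)

/-- The reduced word of `a ^ b * a⁻¹ ^ c`. -/
def powSubWord : Bool → Bool → List (X × Bool)
  | true, false => [a]
  | false, true => [(a.1, !a.2)]
  | _, _ => []

theorem mk_powSubWord (b c : Bool) :
    mk (powSubWord a b c) = mk [a] ^ b.toNat * (mk [a] ^ c.toNat)⁻¹ := by
  cases b <;> cases c
  · simp [powSubWord, ← one_eq_mk]
  · simp only [powSubWord]
    rfl
  · simp [powSubWord]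
  · simp only [powSubWord, Bool.toNat_true, pow_one, mul_inv_cancel, one_eq_mk]

theorem powSubWord_eq_nil_or (b c : Bool) :
    powSubWord a b c = [] ∨ ∃ z : X × Bool, powSubWord a b c = [z] ∧ z.1 = a.1 := by
  cases b <;> cases c <;> simp [powSubWord]

/-- The image of the word `ℓ₁ ⋯ ℓₙ`, followed by the letter `f`, under the substitution
`ℓ ↦ a^(-γ ℓ) ℓ a^(δ ℓ)`, with the powers of `a` between consecutive letters merged:
`ℓ₁ a^(δ ℓ₁ - γ ℓ₂) ℓ₂ ⋯ ℓₙ a^(δ ℓₙ - γ f)`. -/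
def twistWord (f : X × Bool) : List (X × Bool) → List (X × Bool)
  | [] => []
  | ℓ :: r => ℓ :: (powSubWord a (δ ℓ) (γ (r.headD f)) ++ twistWord f r)

variable {a γ δ}

theorem twistWord_eq_or_length_lt (f : X × Bool) (L : List (X × Bool)) :
    twistWord a γ δ f L = L ∨ L.length < (twistWord a γ δ f L).length := by
  induction L with
  | nil => exact Or.inl rfl
  | cons ℓ r ih =>
    have hle : r.length ≤ (twistWord a γ δ f r).length := ih.elim (fun h => h.symm ▸ le_rfl) le_of_lt
    rcases powSubWord_eq_nil_or a (δ ℓ) (γ (r.headD f)) with h | ⟨z, h, -⟩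
    · simpa only [twistWord, h, nil_append, cons.injEq, true_and, length_cons,
        Nat.add_lt_add_iff_right] using ih
    · right
      simp only [twistWord, h, length_cons, length_append]
      omega

theorem isReduced_twistWord_append {f : X × Bool} {L : List (X × Bool)}
    (hL : IsReduced (L ++ [f])) (ha : ∀ ℓ ∈ L ++ [f], ℓ.1 ≠ a.1) :
    IsReduced (twistWord a γ δ f L ++ [f]) := by
  induction L with
  | nil => exact IsReduced.singleton
  | cons ℓ r ih =>
    have hr : IsReduced (r ++ [f]) := IsChain.tail hL
    have hT := ih hr (fun x hx => ha x (mem_cons_of_mem ℓ hx))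
    have hhead : (twistWord a γ δ f r ++ [f]).head? = some (r.headD f) := by
      cases r <;> rfl
    have hℓ : ℓ.1 ≠ a.1 := ha ℓ mem_cons_self
    have hnext : (r.headD f).1 ≠ a.1 := ha _ (by cases r <;> simp)
    simp only [twistWord, cons_append, append_assoc]
    rcases powSubWord_eq_nil_or a (δ ℓ) (γ (r.headD f)) with h | ⟨z, h, hz⟩ <;>
      simp only [h, nil_append, singleton_append]
    · refine IsChain.cons hT ?_
      intro y hy
      rw [hhead, Option.mem_some_iff] at hy
      subst hy
      exact (isChain_cons.1 hL).1 _ (by cases r <;> rfl)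
    · refine IsChain.cons (IsChain.cons hT ?_) ?_
      · intro y hy
        rw [hhead, Option.mem_some_iff] at hy
        subst hy
        exact fun h => absurd (h.symm.trans hz) hnext
      · intro y hy
        simp only [head?_cons, Option.mem_some_iff] at hy
        subst hy
        exact fun h => absurd (h.trans hz) hℓ

theorem isCyclicallyReduced_twistWord {L : List (X × Bool)} (hL : IsCyclicallyReduced L)
    (ha : ∀ ℓ ∈ L, ℓ.1 ≠ a.1) (f : X × Bool) :
    IsCyclicallyReduced (twistWord a γ δ (L.headD f) L) := by
  cases L with
  | nil => exact IsCyclicallyReduced.nil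
  | cons ℓ r =>
    rw [isCyclicallyReduced_cons_iff] at hL
    obtain ⟨t, ht⟩ : ∃ t, twistWord a γ δ ℓ (ℓ :: r) = ℓ :: t := ⟨_, rfl⟩
    rw [headD_cons, ht, isCyclicallyReduced_cons_iff, ← ht]
    refine isReduced_twistWord_append hL fun x hx => ha x ?_
    rcases mem_append.1 hx with hx | hx
    · exact hx
    · exact mem_singleton.1 hx ▸ mem_cons_self

theorem map_mk_eq_twistWord (τ : FreeGroup X →* FreeGroup X)
    (hτ : ∀ ℓ, τ (mk [ℓ]) = (mk [a] ^ (γ ℓ).toNat)⁻¹ * mk [ℓ] * mk [a] ^ (δ ℓ).toNat)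
    (f : X × Bool) (L : List (X × Bool)) :
    τ (mk L) = (mk [a] ^ (γ (L.headD f)).toNat)⁻¹ * mk (twistWord a γ δ f L) *
      mk [a] ^ (γ f).toNat := by
  induction L with
  | nil =>
    change τ (mk []) = _ * mk [] * _
    rw [← one_eq_mk, _root_.map_one, mul_one, headD_nil, inv_mul_cancel]
  | cons ℓ r ih =>
    have hcons : mk (ℓ :: r) = mk [ℓ] * mk r := by
      rw [mul_mk]
      rfl
    have hsplit : mk (twistWord a γ δ f (ℓ :: r)) =
        mk [ℓ] * mk (powSubWord a (δ ℓ) (γ (r.headD f))) * mk (twistWord a γ δ f r) := by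
      rw [mul_mk, mul_mk]
      rfl
    rw [hcons, _root_.map_mul, hτ, ih, hsplit, mk_powSubWord, headD_cons]
    group

theorem isConj_mk_twistWord (τ : FreeGroup X →* FreeGroup X)
    (hτ : ∀ ℓ, τ (mk [ℓ]) = (mk [a] ^ (γ ℓ).toNat)⁻¹ * mk [ℓ] * mk [a] ^ (δ ℓ).toNat)
    (f : X × Bool) (L : List (X × Bool)) :
    IsConj (mk (twistWord a γ δ (L.headD f) L)) (τ (mk L)) := by
  refine isConj_iff.2 ⟨(mk [a] ^ (γ (L.headD f)).toNat)⁻¹, ?_⟩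
  rw [map_mk_eq_twistWord τ hτ (L.headD f), inv_inv]
  cases L <;> rfl

end Twist

variable [DecidableEq X]

theorem norm_pow_le (x : FreeGroup X) (n : ℕ) : (x ^ n).norm ≤ n * x.norm := by
  induction n with
  | zero => simp
  | succ n ih =>
    rw [pow_succ, Nat.succ_mul]
    exact (norm_mul_le _ _).trans (by omega)

theorem norm_pow_of_isCyclicallyReduced {L : List (X × Bool)} (h : IsCyclicallyReduced L)
    (n : ℕ) : (mk L ^ n).norm = n * L.length := by
  rw [pow_mk, norm, toWord_mk, (h.flatten_replicate n).isReduced.reduce_eq]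
  simp

/-- The `m`-th power of `c = u * mk L * u⁻¹` has length at most `m * |c|`, and conjugating it
back by `u` gives `mk L ^ m`, of length `m * |L|`; take `m > 2 |u|`. -/
theorem length_le_norm_conj_of_isCyclicallyReduced {L : List (X × Bool)}
    (h : IsCyclicallyReduced L) (u : FreeGroup X) : L.length ≤ (u * mk L * u⁻¹).norm := by
  set c := u * mk L * u⁻¹
  set m := 2 * u.norm + 1
  have hpow : m * L.length ≤ u.norm + m * c.norm + u.norm :=
    calc m * L.length = (mk L ^ m).norm := (norm_pow_of_isCyclicallyReduced h m).symm
      _ = (u⁻¹ * c ^ m * u).norm := by rw [conj_pow]; group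
      _ ≤ u⁻¹.norm + (c ^ m).norm + u.norm :=
        (norm_mul_le _ _).trans (Nat.add_le_add_right (norm_mul_le _ _) _)
      _ ≤ u.norm + m * c.norm + u.norm := by
        rw [norm_inv_eq]; have := norm_pow_le c m; omega
  by_contra! hlt
  have := Nat.mul_le_mul_left m hlt
  rw [Nat.mul_succ] at this
  omega

theorem cycLen_mk_of_isCyclicallyReduced {L : List (X × Bool)} (h : IsCyclicallyReduced L) :
    cycLen (ConjClasses.mk (mk L)) = L.length := by
  have hL : (mk L).toWord = L := by rw [toWord_mk, h.isReduced.reduce_eq]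
  refine le_antisymm (Nat.sInf_le ⟨mk L, rfl, by rw [hL]⟩) (le_csInf ⟨_, mk L, rfl, rfl⟩ ?_)
  rintro n ⟨g, hg, rfl⟩
  obtain ⟨u, rfl⟩ := isConj_iff.1 (ConjClasses.mk_eq_mk_iff_isConj.1 hg.symm)
  exact length_le_norm_conj_of_isCyclicallyReduced h u

theorem exists_mk_eq_isCyclicallyReduced (c : ConjClasses (FreeGroup X)) :
    ∃ g : FreeGroup X, ConjClasses.mk g = c ∧ IsCyclicallyReduced g.toWord := by
  obtain ⟨x, rfl⟩ := ConjClasses.mk_surjective c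
  have hcr := reduceCyclically.isCyclicallyReduced (isReduced_toWord (x := x))
  refine ⟨mk (reduceCyclically x.toWord), ?_, by rwa [toWord_mk, hcr.isReduced.reduce_eq]⟩
  rw [ConjClasses.mk_eq_mk_iff_isConj, isConj_iff]
  refine ⟨mk (reduceCyclically.conjugator x.toWord), ?_⟩
  have h := congrArg mk (reduceCyclically.conj_conjugator_reduceCyclically x.toWord)
  rwa [mk_toWord, ← mul_mk, ← mul_mk, ← inv_mk] at h

theorem isCycRed_of_isCyclicallyReduced {g : FreeGroup X} (h : IsCyclicallyReduced g.toWord) :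
    IsCycRed g := by
  intro x hx hlast
  simpa using h.2 _ hlast _ hx

end FreeGroup

theorem IsWhiteheadMult.exists_exponents {X : Type} {a : X × Bool} {τ : FreeGroup X ≃* FreeGroup X}
    (hτ : IsWhiteheadMult a τ) : ∃ γ δ : X × Bool → Bool,
      ∀ ℓ, τ (mk [ℓ]) = (mk [a] ^ (γ ℓ).toNat)⁻¹ * mk [ℓ] * mk [a] ^ (δ ℓ).toNat := by
  have h : ∀ x, ∃ p q : Bool, τ (of x) = (mk [a] ^ p.toNat)⁻¹ * of x * mk [a] ^ q.toNat := by
    intro x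
    have h := hτ x
    simp only [Set.mem_insert_iff, Set.mem_singleton_iff] at h
    rcases h with h | h | h | h <;>
      [use false, false; use false, true; use true, false; use true, true] <;>
      simp only [h, Bool.toNat_false, Bool.toNat_true, pow_zero, pow_one, inv_one, one_mul, mul_one]
  choose p q hpq using h
  refine ⟨fun ℓ => if ℓ.2 then p ℓ.1 else q ℓ.1, fun ℓ => if ℓ.2 then q ℓ.1 else p ℓ.1, ?_⟩
  rintro ⟨x, _ | _⟩
  · have : mk [(x, false)] = (of x)⁻¹ := by simp [of, inv_mk, invRev]
    rw [this, _root_.map_inv, hpq]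
    simp only [Bool.false_eq_true, if_false]
    group
  · exact hpq x

open FreeGroup in
/-- If `τ` is a Whitehead automorphism of the second kind with multiplier `a`
such that neither `a` nor `a⁻¹` appears in the cyclic word `w`, then either `τ(w) = w`
or `|τ(w)| > |w|`. -/
theorem whitehead_bad_multiplier {X : Type} [DecidableEq X]
    (w : ConjClasses (FreeGroup X)) (a : X × Bool) (τ : FreeGroup X ≃* FreeGroup X)
    (hτ : IsWhiteheadMult a τ) (ha : a.1 ∉ usedLetters w) :
    actC τ w = w ∨ cycLen w < cycLen (actC τ w) := by
  obtain ⟨γ, δ, hγδ⟩ := hτ.exists_exponents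
  obtain ⟨g, rfl, hg⟩ := exists_mk_eq_isCyclicallyReduced w
  have hfree : ∀ ℓ ∈ g.toWord, ℓ.1 ≠ a.1 := fun ℓ hℓ h =>
    ha ⟨g, rfl, isCycRed_of_isCyclicallyReduced hg, ℓ.2, h ▸ hℓ⟩
  have himage : actC τ (ConjClasses.mk g) =
      ConjClasses.mk (mk (twistWord a γ δ (g.toWord.headD a) g.toWord)) := by
    refine (ConjClasses.mk_eq_mk_iff_isConj.2 ?_).symm
    simpa only [mk_toWord] using isConj_mk_twistWord (τ : FreeGroup X →* FreeGroup X) hγδ a g.toWord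
  have hlen : cycLen (ConjClasses.mk g) = g.toWord.length := by
    simpa only [mk_toWord] using cycLen_mk_of_isCyclicallyReduced hg
  rw [himage, cycLen_mk_of_isCyclicallyReduced (isCyclicallyReduced_twistWord hg hfree a), hlen]
  rcases twistWord_eq_or_length_lt (γ := γ) (δ := δ) (g.toWord.headD a) g.toWord with h | h
  · exact Or.inl (by rw [h, mk_toWord])
  · exact Or.inr h
end

section
/- Let F = F(X) be a free group on a set X, let v and w be nontrivial cyclic words of F, and suppose there exists an automorphism φ of F such that the pair (φ(v), φ(w)) is good, i.e., either L(φ(v)) ∪ L(φ(w)) ≠ X (frugal) or L(φ(v)) ∩ L(φ(w)) = ∅ (disjoint). Then there exists a proper free splitting A * B of F such that both v and w are elliptic to A * B. -/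
/-!
Whether `(φ v, φ w)` is frugal or disjoint, the letters split as `X = S ⊔ Sᶜ` with both parts
nonempty and each of `φ v`, `φ w` written in the letters of one part only: for a frugal pair take
`S = X \ {x}` with `x` an unused letter, for a disjoint pair take `S = L(φ v)`. The subgroups
`⟨S⟩` and `⟨Sᶜ⟩` form a proper free splitting of `F(X)`, and the cyclically reduced
representatives of `φ v` and `φ w` lie in one of the two factors. Pulling this splitting back
along `φ` gives the splitting for `v` and `w`.
-/

open FreeGroup

open FreeGroup

/-- `(A, B)` is a free splitting of `F`: the natural map from the free product `A ∗ B`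
to `F` is an isomorphism (internal free product). -/
def IsFreeSplitting {F : Type} [Group F] (A B : Subgroup F) : Prop :=
  Function.Bijective (Monoid.Coprod.lift A.subtype B.subtype)

/-- `g` is elliptic to the splitting `A * B`: `g` lies in a conjugate of `A` or of `B`. -/
def Elliptic {F : Type} [Group F] (A B : Subgroup F) (g : F) : Prop :=
  ∃ y : F, y * g * y⁻¹ ∈ A ∨ y * g * y⁻¹ ∈ B

/-- A cyclic word (conjugacy class) is elliptic to `A * B` if some representative lies in
`A` or in `B`. -/
def EllipticC {F : Type} [Group F] (A B : Subgroup F) (c : ConjClasses F) : Prop :=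
  ∃ g : F, ConjClasses.mk g = c ∧ (g ∈ A ∨ g ∈ B)

/-- The pair of cyclic words `(v, w)` is frugal: together they do not use all letters of `X`. -/
def Frugal {X : Type} [DecidableEq X] (v w : ConjClasses (FreeGroup X)) : Prop :=
  usedLetters v ∪ usedLetters w ≠ Set.univ

/-- The pair `(v, w)` is disjoint: `v` and `w` share no letters. -/
def DisjPair {X : Type} [DecidableEq X] (v w : ConjClasses (FreeGroup X)) : Prop :=
  usedLetters v ∩ usedLetters w = ∅

/-- A pair is good if it is frugal or disjoint. -/
def GoodPair {X : Type} [DecidableEq X] (v w : ConjClasses (FreeGroup X)) : Prop :=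
  Frugal v w ∨ DisjPair v w

/-- `(v, w)` has minimal length in its orbit under `Aut(F)`. -/
def MinLenPair {X : Type} [DecidableEq X] (v w : ConjClasses (FreeGroup X)) : Prop :=
  ∀ φ : FreeGroup X ≃* FreeGroup X,
    cycLen v + cycLen w ≤ cycLen (actC φ v) + cycLen (actC φ w)

open scoped Monoid.Coprod

section FreeSplitting

variable {F G : Type} [Group F] [Group G] {A B : Subgroup F}

theorem IsFreeSplitting.disjoint (h : IsFreeSplitting A B) : Disjoint A B := by
  refine Subgroup.disjoint_def.mpr fun {x} hxA hxB => ?_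
  have hinl : Monoid.Coprod.inl (⟨x, hxA⟩ : A) = (Monoid.Coprod.inr (⟨x, hxB⟩ : B) : A ∗ B) :=
    h.1 (by simp)
  simpa using congrArg (Subtype.val ∘ Monoid.Coprod.fst) hinl

theorem IsFreeSplitting.ne_top_left (h : IsFreeSplitting A B) (hB : B ≠ ⊥) : A ≠ ⊤ :=
  fun hA => hB (top_disjoint.mp (hA ▸ h.disjoint))

theorem IsFreeSplitting.ne_top_right (h : IsFreeSplitting A B) (hA : A ≠ ⊥) : B ≠ ⊤ :=
  fun hB => hA (disjoint_top.mp (hB ▸ h.disjoint))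

theorem isFreeSplitting_range {M N : Type} [Group M] [Group N] {f : M →* F} {g : N →* F}
    (hf : Function.Injective f) (hg : Function.Injective g)
    (h : Function.Bijective (Monoid.Coprod.lift f g)) : IsFreeSplitting f.range g.range := by
  have hfac : Monoid.Coprod.lift f.range.subtype g.range.subtype =
      (Monoid.Coprod.lift f g).comp
        (MulEquiv.coprodCongr (MonoidHom.ofInjective hf) (MonoidHom.ofInjective hg)).symm := by
    ext <;> simp
  rw [IsFreeSplitting, hfac, MonoidHom.coe_comp]
  exact h.comp (MulEquiv.bijective _)

theorem IsFreeSplitting.map (h : IsFreeSplitting A B) (e : F ≃* G) :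
    IsFreeSplitting (A.map (e : F →* G)) (B.map (e : F →* G)) := by
  rw [← A.range_subtype, ← B.range_subtype, MonoidHom.map_range, MonoidHom.map_range]
  refine isFreeSplitting_range (e.injective.comp A.subtype_injective)
    (e.injective.comp B.subtype_injective) ?_
  rw [← Monoid.Coprod.comp_lift, MonoidHom.coe_comp]
  exact e.bijective.comp h

theorem Subgroup.map_equiv_ne_top (hA : A ≠ ⊤) (e : F ≃* G) : A.map (e : F →* G) ≠ ⊤ := by
  rw [← Subgroup.map_equiv_top e]
  exact (Subgroup.map_injective e.injective).ne hA

theorem EllipticC.map {c : ConjClasses F} (h : EllipticC A B c) (e : F ≃* G) :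
    EllipticC (A.map (e : F →* G)) (B.map (e : F →* G)) (ConjClasses.map (e : F →* G) c) := by
  obtain ⟨g, rfl, hg⟩ := h
  exact ⟨e g, rfl, hg.imp (Subgroup.mem_map_of_mem _) (Subgroup.mem_map_of_mem _)⟩

end FreeSplitting

namespace FreeGroup

def sumEquivCoprod {α β : Type*} : FreeGroup (α ⊕ β) ≃* FreeGroup α ∗ FreeGroup β :=
  MonoidHom.toMulEquiv (lift (Sum.elim (Monoid.Coprod.inl ∘ of) (Monoid.Coprod.inr ∘ of)))
    (Monoid.Coprod.lift (map Sum.inl) (map Sum.inr))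
    (by ext (a | b) <;> simp)
    (by ext <;> simp)

variable {α : Type}

theorem bijective_lift_map_val_compl (S : Set α) :
    Function.Bijective (Monoid.Coprod.lift (map ((↑) : S → α)) (map ((↑) : ↥Sᶜ → α))) := by
  classical
  have hfac : Monoid.Coprod.lift (map ((↑) : S → α)) (map ((↑) : ↥Sᶜ → α)) =
      (freeGroupCongr (Equiv.sumCompl (· ∈ S))).toMonoidHom.comp
        sumEquivCoprod.symm.toMonoidHom := by
    ext <;> simp [sumEquivCoprod]
  rw [hfac, MonoidHom.coe_comp]
  exact (MulEquiv.bijective _).comp (MulEquiv.bijective _)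

theorem isFreeSplitting_closure_compl (S : Set α) :
    IsFreeSplitting (Subgroup.closure (of '' S)) (Subgroup.closure (of '' Sᶜ)) := by
  have hS := range_map (f := ((↑) : S → α))
  have hSc := range_map (f := ((↑) : ↥Sᶜ → α))
  rw [Subtype.range_coe] at hS hSc
  rw [← hS, ← hSc]
  exact isFreeSplitting_range (map_injective Subtype.val_injective)
    (map_injective Subtype.val_injective) (bijective_lift_map_val_compl S)

theorem closure_of_image_ne_bot {S : Set α} (hS : S.Nonempty) :
    Subgroup.closure (of '' S) ≠ ⊥ := by
  obtain ⟨x, hx⟩ := hS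
  exact Subgroup.ne_bot_iff_exists_ne_one.mpr
    ⟨⟨of x, Subgroup.subset_closure ⟨x, hx, rfl⟩⟩, by simp⟩

variable [DecidableEq α]

theorem mem_closure_of_forall_mem_toWord {S : Set α} {g : FreeGroup α}
    (h : ∀ p ∈ g.toWord, p.1 ∈ S) : g ∈ Subgroup.closure (of '' S) := by
  rw [← mk_toWord (x := g), ← MonoidHom.id_apply (FreeGroup α) (mk _), ← lift_of_eq_id, lift_mk]
  refine Subgroup.list_prod_mem _ fun y hy => ?_
  obtain ⟨p, hp, rfl⟩ := List.mem_map.mp hy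
  have hof : of p.1 ∈ Subgroup.closure (of '' S) := Subgroup.subset_closure ⟨p.1, h p hp, rfl⟩
  cases p.2 <;> simp [hof]

theorem isCycRed_mk_reduceCyclically {L : List (α × Bool)} (hL : IsReduced L) :
    IsCycRed (mk (reduceCyclically L)) := by
  have hcr := reduceCyclically.isCyclicallyReduced hL
  rw [IsCycRed, toWord_mk, hcr.isReduced.reduce_eq]
  intro x hx hlast
  simpa using hcr.2 _ hlast x hx rfl

end FreeGroup

open FreeGroup

section CyclicWords

variable {X : Type} [DecidableEq X]

theorem exists_isCycRed_rep (c : ConjClasses (FreeGroup X)) :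
    ∃ g : FreeGroup X, ConjClasses.mk g = c ∧ IsCycRed g := by
  obtain ⟨g, rfl⟩ := ConjClasses.exists_rep c
  refine ⟨mk (reduceCyclically g.toWord), ?_, isCycRed_mk_reduceCyclically isReduced_toWord⟩
  rw [ConjClasses.mk_eq_mk_iff_isConj, isConj_iff]
  refine ⟨mk (reduceCyclically.conjugator g.toWord), ?_⟩
  conv_rhs =>
    rw [← mk_toWord (x := g), ← reduceCyclically.conj_conjugator_reduceCyclically g.toWord]
  rw [inv_mk, mul_mk, mul_mk]

theorem usedLetters_nonempty {c : ConjClasses (FreeGroup X)} (hc : c ≠ ConjClasses.mk 1) :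
    (usedLetters c).Nonempty := by
  obtain ⟨g, rfl, hg⟩ := exists_isCycRed_rep c
  obtain ⟨p, hp⟩ := List.exists_mem_of_ne_nil _ (mt toWord_eq_nil_iff.mp (mt (congrArg _) hc))
  exact ⟨p.1, g, rfl, hg, p.2, hp⟩

theorem exists_rep_mem_closure {S : Set X} {c : ConjClasses (FreeGroup X)}
    (h : usedLetters c ⊆ S) :
    ∃ g : FreeGroup X, ConjClasses.mk g = c ∧ g ∈ Subgroup.closure (of '' S) := by
  obtain ⟨g, rfl, hg⟩ := exists_isCycRed_rep c
  exact ⟨g, rfl, mem_closure_of_forall_mem_toWord fun p hp => h ⟨g, rfl, hg, p.2, hp⟩⟩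

theorem ellipticC_closure_compl {S : Set X} {c : ConjClasses (FreeGroup X)}
    (h : usedLetters c ⊆ S ∨ usedLetters c ⊆ Sᶜ) :
    EllipticC (Subgroup.closure (of '' S)) (Subgroup.closure (of '' Sᶜ)) c := by
  rcases h with h | h
  · obtain ⟨g, hg, hmem⟩ := exists_rep_mem_closure h
    exact ⟨g, hg, Or.inl hmem⟩
  · obtain ⟨g, hg, hmem⟩ := exists_rep_mem_closure h
    exact ⟨g, hg, Or.inr hmem⟩

theorem exists_separating_set_of_goodPair {v w : ConjClasses (FreeGroup X)}
    (hv : v ≠ ConjClasses.mk 1) (hw : w ≠ ConjClasses.mk 1) (hgood : GoodPair v w) :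
    ∃ S : Set X, S.Nonempty ∧ Sᶜ.Nonempty ∧ usedLetters v ⊆ S ∧
      (usedLetters w ⊆ S ∨ usedLetters w ⊆ Sᶜ) := by
  rcases hgood with hfrugal | hdisj
  · obtain ⟨x, hx⟩ := (Set.ne_univ_iff_exists_notMem _).mp hfrugal
    obtain ⟨y, hy⟩ := usedLetters_nonempty hv
    refine ⟨{x}ᶜ, ⟨y, ?_⟩, ⟨x, by simp⟩, ?_, Or.inl ?_⟩ <;> grind
  · obtain ⟨y, hy⟩ := usedLetters_nonempty hw
    refine ⟨usedLetters v, usedLetters_nonempty hv, ⟨y, ?_⟩, subset_rfl, Or.inr ?_⟩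
    · exact fun hyv => (Set.eq_empty_iff_forall_notMem.mp hdisj) y ⟨hyv, hy⟩
    · exact fun z hzw hzv => (Set.eq_empty_iff_forall_notMem.mp hdisj) z ⟨hzv, hzw⟩

end CyclicWords

section Automorphisms

variable {X : Type} (φ : FreeGroup X ≃* FreeGroup X)

theorem actC_symm_actC (c : ConjClasses (FreeGroup X)) : actC φ.symm (actC φ c) = c := by
  obtain ⟨g, rfl⟩ := ConjClasses.exists_rep c
  exact congrArg ConjClasses.mk (φ.symm_apply_apply g)

theorem actC_ne_one {c : ConjClasses (FreeGroup X)} (hc : c ≠ ConjClasses.mk 1) :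
    actC φ c ≠ ConjClasses.mk 1 := by
  refine fun h => hc ?_
  rw [← actC_symm_actC φ c, h]
  exact congrArg ConjClasses.mk (map_one φ.symm)

end Automorphisms

/-- If some automorphism carries the pair of nontrivial cyclic words `(v, w)`
to a good pair, then there is a proper free splitting `A * B` of `F(X)` to which both
`v` and `w` are elliptic. -/
theorem splitting_of_good_pair {X : Type} [DecidableEq X]
    (v w : ConjClasses (FreeGroup X))
    (hv : v ≠ ConjClasses.mk 1) (hw : w ≠ ConjClasses.mk 1)
    (hgood : ∃ φ : FreeGroup X ≃* FreeGroup X, GoodPair (actC φ v) (actC φ w)) :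
    ∃ A B : Subgroup (FreeGroup X), IsFreeSplitting A B ∧ A ≠ ⊤ ∧ B ≠ ⊤ ∧
      EllipticC A B v ∧ EllipticC A B w := by
  obtain ⟨φ, hgood⟩ := hgood
  obtain ⟨S, hS, hSc, hvS, hwS⟩ :=
    exists_separating_set_of_goodPair (actC_ne_one φ hv) (actC_ne_one φ hw) hgood
  have hsplit := isFreeSplitting_closure_compl S
  refine ⟨_, _, hsplit.map φ.symm,
    Subgroup.map_equiv_ne_top (hsplit.ne_top_left (closure_of_image_ne_bot hSc)) φ.symm,
    Subgroup.map_equiv_ne_top (hsplit.ne_top_right (closure_of_image_ne_bot hS)) φ.symm, ?_, ?_⟩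
  · exact actC_symm_actC φ v ▸ (ellipticC_closure_compl (Or.inl hvS)).map φ.symm
  · exact actC_symm_actC φ w ▸ (ellipticC_closure_compl hwS).map φ.symm
end

section
/- Let F = F(X) be a free group on a set X, let v and w be nontrivial cyclic words of F, and suppose there exists a proper free splitting A * B of F such that both v and w are elliptic to A * B. Then there exists an automorphism φ of F such that the pair (φ(v), φ(w)) is good, i.e., either the letters used by φ(v) and φ(w) together do not exhaust X, or φ(v) and φ(w) use disjoint sets of letters. -/
open FreeGroup

open FreeGroup

/-!
By Nielsen–Schreier `A` and `B` are free, so bases of `A` and `B` together form a basis of `F(X)`.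
By invariance of rank it is indexed by a set in bijection with `X`, and the automorphism sending
it to `X` maps `A` and `B` onto `⟨X₁⟩` and `⟨X₂⟩` for a partition `X = X₁ ⊔ X₂`, with both parts
nonempty because `A` and `B` are proper. A cyclic word with a representative in `⟨Xᵢ⟩` uses only
letters of `Xᵢ`, since a cyclically reduced word occurs, up to rotation, inside each of its
conjugates. Two cyclic words, each confined to one side of the partition, then form a frugal pair
(same side) or a disjoint one (opposite sides).
-/

namespace FreeGroupBasis

variable {ι κ G H : Type*} [Group G] [Group H]

def coprod (b₁ : FreeGroupBasis ι G) (b₂ : FreeGroupBasis κ H) :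
    FreeGroupBasis (ι ⊕ κ) (Monoid.Coprod G H) :=
  .ofRepr <| MulEquiv.symm <| MonoidHom.toMulEquiv
    (FreeGroup.lift (Sum.elim (Monoid.Coprod.inl ∘ b₁) (Monoid.Coprod.inr ∘ b₂)))
    (Monoid.Coprod.lift (b₁.lift (of ∘ Sum.inl)) (b₂.lift (of ∘ Sum.inr)))
    (by ext (i | k) <;> simp [FreeGroupBasis.lift])
    (by
      apply Monoid.Coprod.hom_ext
      · exact b₁.ext_hom _ _ fun i => by simp [FreeGroupBasis.lift]
      · exact b₂.ext_hom _ _ fun k => by simp [FreeGroupBasis.lift])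

lemma closure_range (b : FreeGroupBasis ι G) : Subgroup.closure (Set.range b) = ⊤ := by
  have : Set.range b = (b.repr.symm : FreeGroup ι →* G) '' Set.range of := by
    rw [← Set.range_comp]; rfl
  rw [this, ← MonoidHom.map_closure, closure_range_of, Subgroup.map_top_of_surjective]
  exact b.repr.symm.surjective

lemma exists_mulEquiv_map_closure_image (b : FreeGroupBasis ι (FreeGroup κ)) :
    ∃ (φ : FreeGroup κ ≃* FreeGroup κ) (e : ι ≃ κ), ∀ s : Set ι,
      (Subgroup.closure (b '' s)).map φ = Subgroup.closure (of '' (e '' s)) := by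
  let e := Equiv.ofFreeGroupEquiv b.repr.symm
  refine ⟨b.repr.trans (freeGroupCongr e), e, fun s => ?_⟩
  rw [MonoidHom.map_closure, Set.image_image, Set.image_image]
  congr 2
  ext i
  simp

end FreeGroupBasis

lemma Subgroup.eq_closure_image_subtype {G ι : Type*} [Group G] (A : Subgroup G)
    (b : FreeGroupBasis ι A) : A = Subgroup.closure (A.subtype '' Set.range b) := by
  rw [← MonoidHom.map_closure, b.closure_range, ← MonoidHom.range_eq_map, A.range_subtype]

theorem IsFreeSplitting.exists_freeGroupBasis_sum {F : Type} [Group F] {A B : Subgroup F}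
    (h : IsFreeSplitting A B) [IsFreeGroup A] [IsFreeGroup B] :
    ∃ (ι κ : Type) (b : FreeGroupBasis (ι ⊕ κ) F),
      A = Subgroup.closure (b '' Set.range Sum.inl) ∧
        B = Subgroup.closure (b '' Set.range Sum.inr) := by
  let b := ((IsFreeGroup.basis A).coprod (IsFreeGroup.basis B)).map (MulEquiv.ofBijective _ h)
  refine ⟨_, _, b, ?_, ?_⟩
  · conv_lhs => rw [A.eq_closure_image_subtype (IsFreeGroup.basis A)]
    rw [← Set.range_comp, ← Set.range_comp]
    rfl
  · conv_lhs => rw [B.eq_closure_image_subtype (IsFreeGroup.basis B)]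
    rw [← Set.range_comp, ← Set.range_comp]
    rfl

theorem IsFreeSplitting.exists_mulEquiv_map_eq_closure {X : Type} {A B : Subgroup (FreeGroup X)}
    (h : IsFreeSplitting A B) :
    ∃ (φ : FreeGroup X ≃* FreeGroup X) (X₁ : Set X),
      A.map φ = Subgroup.closure (of '' X₁) ∧ B.map φ = Subgroup.closure (of '' X₁ᶜ) := by
  obtain ⟨ι, κ, b, rfl, rfl⟩ := h.exists_freeGroupBasis_sum
  obtain ⟨φ, e, he⟩ := b.exists_mulEquiv_map_closure_image
  refine ⟨φ, e '' Set.range Sum.inl, he _, ?_⟩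
  rw [he, ← Equiv.image_compl, Set.compl_range_inl]

lemma Subgroup.nonempty_compl_of_map_eq_closure {X : Type} {B : Subgroup (FreeGroup X)}
    {φ : FreeGroup X ≃* FreeGroup X} {Y : Set X} (h : B.map φ = Subgroup.closure (of '' Y))
    (hB : B ≠ ⊤) : Yᶜ.Nonempty := by
  rw [Set.nonempty_compl]
  rintro rfl
  apply hB
  apply Subgroup.map_injective (f := (φ : FreeGroup X →* FreeGroup X)) φ.injective
  rw [h, Set.image_univ, closure_range_of, Subgroup.map_equiv_top]

namespace FreeGroup

variable {α : Type*}

theorem isCyclicallyReduced_cons_iff_s6 {a : α × Bool} {L : List (α × Bool)} :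
    IsCyclicallyReduced (a :: L) ↔ IsCyclicallyReduced (L ++ [a]) := by
  rcases L with _ | ⟨b, L⟩
  · simp
  have hsnoc : IsReduced (b :: L ++ [a]) ↔
      IsReduced (b :: L) ∧ ∀ x ∈ (b :: L).getLast?, x.1 = a.1 → x.2 = a.2 := by
    unfold IsReduced
    rw [List.isChain_append]
    simp
  rw [isCyclicallyReduced_cons_append_iff, isCyclicallyReduced_iff, isReduced_cons_cons, hsnoc,
    List.getLast?_cons_cons]
  simp only [List.head?_cons, Option.mem_some_iff, forall_eq']
  tauto

theorem isReduced_cons_cons_iff_ne {a b : α × Bool} {L : List (α × Bool)} :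
    IsReduced (a :: b :: L) ↔ b ≠ (a.1, !a.2) ∧ IsReduced (b :: L) := by
  rw [isReduced_cons_cons]
  rcases a with ⟨x, _ | _⟩ <;> rcases b with ⟨y, _ | _⟩ <;> simp [eq_comm]

theorem IsReduced.invRev [DecidableEq α] {L : List (α × Bool)} (h : IsReduced L) :
    IsReduced (invRev L) := by
  rw [isReduced_iff_reduce_eq, reduce_invRev, h.reduce_eq]

theorem mk_cons (b : α × Bool) (m : List (α × Bool)) : mk (b :: m) = mk [b] * mk m := by
  rw [mul_mk]; rfl

theorem mk_inv_singleton (a : α × Bool) : mk [(a.1, !a.2)] = (mk [a])⁻¹ := by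
  simp [inv_mk, invRev]

/-- Induction on the last letter `a` of the conjugator: when `a` cancels against the first or the
last letter of `g`, conjugating by `a` rotates `g`; otherwise no cancellation occurs at all. -/
theorem map_fst_subset_toWord_conj [DecidableEq α] {h g : List (α × Bool)} (hh : IsReduced h)
    (hg : IsCyclicallyReduced g) :
    g.map Prod.fst ⊆ (mk h * mk g * (mk h)⁻¹).toWord.map Prod.fst := by
  induction h using List.reverseRecOn generalizing g with
  | nil => simp [hg.isReduced.reduce_eq]
  | append_singleton h a ih =>
    have hh' : IsReduced h := hh.infix ⟨[], [a], rfl⟩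
    have hsplit : mk (h ++ [a]) = mk h * mk [a] := mul_mk.symm
    rcases g with _ | ⟨b, m⟩
    · simp
    by_cases hab : b = (a.1, !a.2)
    · have hconj : mk (h ++ [a]) * mk (b :: m) * (mk (h ++ [a]))⁻¹ =
          mk h * mk (m ++ [b]) * (mk h)⁻¹ := by
        rw [hsplit, ← mul_mk (L₁ := m), mk_cons b m, hab, mk_inv_singleton]
        group
      rw [hconj]
      refine List.Subset.trans (fun x hx => ?_) (ih hh' (isCyclicallyReduced_cons_iff_s6.1 hg))
      simpa [or_comm] using hx
    obtain ⟨m', c, hc⟩ := (List.eq_nil_or_concat (b :: m)).resolve_left (List.cons_ne_nil _ _)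
    rw [List.concat_eq_append] at hc
    have hleft : IsReduced (h ++ [a] ++ m' ++ [c]) := by
      rw [List.append_assoc _ m', ← hc]
      exact hh.append_overlap (isReduced_cons_cons_iff_ne.2 ⟨hab, hg.isReduced⟩)
        (List.cons_ne_nil _ _)
    rw [hc] at hg ⊢
    by_cases hac : c = a
    · subst hac
      have hconj : mk (h ++ [c]) * mk (m' ++ [c]) * (mk (h ++ [c]))⁻¹ =
          mk h * mk (c :: m') * (mk h)⁻¹ := by
        rw [hsplit, ← mul_mk (L₁ := m'), mk_cons c m']
        group
      rw [hconj]
      refine List.Subset.trans (fun x hx => ?_) (ih hh' (isCyclicallyReduced_cons_iff_s6.2 hg))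
      simpa [or_comm] using hx
    have hred : IsReduced (h ++ [a] ++ m' ++ [c] ++ invRev (h ++ [a])) := by
      refine hleft.append_overlap ?_ (List.cons_ne_nil _ _)
      have : invRev (h ++ [a]) = (a.1, !a.2) :: invRev h := by simp [invRev]
      rw [List.singleton_append, this, isReduced_cons_cons_iff_ne, ← this]
      refine ⟨?_, hh.invRev⟩
      contrapose! hac
      simp_all [Prod.ext_iff]
    rw [inv_mk, mul_mk, mul_mk, toWord_mk, ← List.append_assoc, hred.reduce_eq]
    exact List.map_subset _ fun y hy => by simp only [List.mem_append] at hy ⊢; tauto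

theorem map_fst_toWord_subset_conj [DecidableEq α] {g : FreeGroup α}
    (hg : IsCyclicallyReduced g.toWord) (h : FreeGroup α) :
    g.toWord.map Prod.fst ⊆ (h * g * h⁻¹).toWord.map Prod.fst := by
  simpa only [mk_toWord] using map_fst_subset_toWord_conj isReduced_toWord hg (h := h.toWord)

theorem mem_of_mem_map_fst_toWord_of_mem_closure [DecidableEq α] {Y : Set α} {g : FreeGroup α}
    (hg : g ∈ Subgroup.closure (of '' Y)) : ∀ x ∈ g.toWord.map Prod.fst, x ∈ Y := by
  induction hg using Subgroup.closure_induction with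
  | mem _ hy =>
    obtain ⟨y, hy, rfl⟩ := hy
    simpa using hy
  | one => simp
  | mul g₁ g₂ _ _ h₁ h₂ =>
    intro x hx
    obtain ⟨a, ha, rfl⟩ := List.mem_map.1 hx
    rcases List.mem_append.1 ((toWord_mul_sublist g₁ g₂).subset ha) with ha | ha
    · exact h₁ _ (List.mem_map_of_mem ha)
    · exact h₂ _ (List.mem_map_of_mem ha)
  | inv g _ hg =>
    intro x hx
    simp only [toWord_inv, invRev, List.map_reverse, List.map_map, List.mem_reverse] at hx
    simpa using hg x (by simpa [Function.comp_def] using hx)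

end FreeGroup

section CyclicWords

variable {X : Type} [DecidableEq X]

lemma IsCycRed.isCyclicallyReduced {g : FreeGroup X} (hg : IsCycRed g) :
    IsCyclicallyReduced g.toWord := by
  refine ⟨isReduced_toWord, fun a ha b hb hab => ?_⟩
  by_contra hne
  exact hg b hb (by rw [ha]; exact congrArg some (Prod.ext hab (Bool.eq_not.2 hne)))

lemma usedLetters_subset_of_mem_closure {c : ConjClasses (FreeGroup X)} {g : FreeGroup X}
    {Y : Set X} (hgc : ConjClasses.mk g = c) (hg : g ∈ Subgroup.closure (of '' Y)) :
    usedLetters c ⊆ Y := by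
  rintro x ⟨g', hg'c, hcyc, b, hb⟩
  obtain ⟨u, rfl⟩ := isConj_iff.1 (ConjClasses.mk_eq_mk_iff_isConj.1 (hg'c.trans hgc.symm))
  exact mem_of_mem_map_fst_toWord_of_mem_closure hg x
    (map_fst_toWord_subset_conj hcyc.isCyclicallyReduced u (List.mem_map_of_mem (f := Prod.fst) hb))

lemma goodPair_of_subset_or_subset_compl {v w : ConjClasses (FreeGroup X)} {Y : Set X}
    (hY : Y.Nonempty) (hYc : Yᶜ.Nonempty)
    (hv : usedLetters v ⊆ Y ∨ usedLetters v ⊆ Yᶜ) (hw : usedLetters w ⊆ Y ∨ usedLetters w ⊆ Yᶜ) :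
    GoodPair v w := by
  have hY' : Y ≠ Set.univ := Set.nonempty_compl.1 hYc
  have hYc' : Yᶜ ≠ Set.univ := Set.nonempty_compl.1 (by rwa [compl_compl])
  rcases hv with hv | hv <;> rcases hw with hw | hw
  · exact Or.inl fun h => hY' (Set.univ_subset_iff.1 (h ▸ Set.union_subset hv hw))
  · exact Or.inr (Set.disjoint_iff_inter_eq_empty.1 (disjoint_compl_right.mono hv hw))
  · exact Or.inr (Set.disjoint_iff_inter_eq_empty.1 (disjoint_compl_left.mono hv hw))
  · exact Or.inl fun h => hYc' (Set.univ_subset_iff.1 (h ▸ Set.union_subset hv hw))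

end CyclicWords

theorem good_pair_of_splitting_general {X : Type} [DecidableEq X]
    (v w : ConjClasses (FreeGroup X))
    (hsplit : ∃ A B : Subgroup (FreeGroup X), IsFreeSplitting A B ∧ A ≠ ⊤ ∧ B ≠ ⊤ ∧
      EllipticC A B v ∧ EllipticC A B w) :
    ∃ φ : FreeGroup X ≃* FreeGroup X, GoodPair (actC φ v) (actC φ w) := by
  obtain ⟨A, B, hAB, hA, hB, ⟨gv, rfl, hgv⟩, ⟨gw, rfl, hgw⟩⟩ := hsplit
  obtain ⟨φ, X₁, hφA, hφB⟩ := hAB.exists_mulEquiv_map_eq_closure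
  have hside : ∀ g, g ∈ A ∨ g ∈ B →
      usedLetters (actC φ (.mk g)) ⊆ X₁ ∨ usedLetters (actC φ (.mk g)) ⊆ X₁ᶜ := by
    rintro g (hg | hg)
    · exact .inl (usedLetters_subset_of_mem_closure rfl (hφA ▸ Subgroup.mem_map_of_mem _ hg))
    · exact .inr (usedLetters_subset_of_mem_closure rfl (hφB ▸ Subgroup.mem_map_of_mem _ hg))
  refine ⟨φ, goodPair_of_subset_or_subset_compl ?_ (Subgroup.nonempty_compl_of_map_eq_closure hφA hA)
    (hside gv hgv) (hside gw hgw)⟩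
  simpa using Subgroup.nonempty_compl_of_map_eq_closure hφB hB

/-- If both nontrivial cyclic words `v` and `w` are elliptic to some proper
free splitting `A * B` of `F(X)`, then some automorphism carries `(v, w)` to a good pair. -/
theorem good_pair_of_splitting {X : Type} [DecidableEq X]
    (v w : ConjClasses (FreeGroup X))
    (hv : v ≠ ConjClasses.mk 1) (hw : w ≠ ConjClasses.mk 1)
    (hsplit : ∃ A B : Subgroup (FreeGroup X), IsFreeSplitting A B ∧ A ≠ ⊤ ∧ B ≠ ⊤ ∧
      EllipticC A B v ∧ EllipticC A B w) :
    ∃ φ : FreeGroup X ≃* FreeGroup X, GoodPair (actC φ v) (actC φ w) :=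
  good_pair_of_splitting_general v w hsplit
end

section
/- Let F(X) be a free group on a finite set X with |X| ≥ 2, let A * B be a free splitting of F whose basis is X (i.e., X = X_A ⊔ X_B with A = ⟨X_A⟩, B = ⟨X_B⟩), let ν be an elementary Nielsen transformation, and let C * D be a free splitting with basis ν(X). Then there exists x ∈ X that is elliptic to both A * B and C * D; in particular, the distance between [A*B] and [C*D] in the ellipticity graph is at most two. -/
open FreeGroup

/-- A proper free splitting of `F`, as data. -/
def ProperSplitting (F : Type) [Group F] : Type :=
  {p : Subgroup F × Subgroup F // IsFreeSplitting p.1 p.2 ∧ p.1 ≠ ⊤ ∧ p.2 ≠ ⊤}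

/-- Equivalence of proper free splittings: simultaneous conjugation, possibly swapping
the two factors. -/
def splitRel {F : Type} [Group F] (p q : ProperSplitting F) : Prop :=
  ∃ x : F,
    (q.1.1 = Subgroup.map (MulAut.conj x).toMonoidHom p.1.1 ∧
     q.1.2 = Subgroup.map (MulAut.conj x).toMonoidHom p.1.2) ∨
    (q.1.1 = Subgroup.map (MulAut.conj x).toMonoidHom p.1.2 ∧
     q.1.2 = Subgroup.map (MulAut.conj x).toMonoidHom p.1.1)

/-- Equivalence classes of proper free splittings. -/
def SplitClass (F : Type) [Group F] : Type := Quot (@splitRel F _)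

/-- Vertices of the ellipticity graph: classes of proper free splittings together with
nontrivial cyclic words (conjugacy classes). -/
def ZVert (F : Type) [Group F] : Type :=
  SplitClass F ⊕ {c : ConjClasses F // c ≠ ConjClasses.mk 1}

/-- The ellipticity graph `Z(F)`: a splitting class and a nontrivial cyclic word are
adjacent iff the word is elliptic to the splitting. -/
def ZGraph (F : Type) [Group F] : SimpleGraph (ZVert F) :=
  SimpleGraph.fromRel (fun u v =>
    ∃ (s : ProperSplitting F) (c : {c : ConjClasses F // c ≠ ConjClasses.mk 1}),
      u = Sum.inl (Quot.mk _ s) ∧ v = Sum.inr c ∧ EllipticC s.1.1 s.1.2 c.1)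

/-- An elementary Nielsen transformation: it sends some `a ∈ X` to `a⁻¹` or to `ab`
(`b ∈ X`, `b ≠ a`) and fixes all other elements of `X`. -/
def IsElemNielsen {X : Type} (ν : FreeGroup X ≃* FreeGroup X) : Prop :=
  ∃ a : X, (∀ x : X, x ≠ a → ν (FreeGroup.of x) = FreeGroup.of x) ∧
    (ν (FreeGroup.of a) = (FreeGroup.of a)⁻¹ ∨
      ∃ b : X, b ≠ a ∧ ν (FreeGroup.of a) = FreeGroup.of a * FreeGroup.of b)

/-- The splitting `A * B` has basis `φ(X)`: there is a partition `X = S ⊔ T` with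
`A = ⟨φ(S)⟩` and `B = ⟨φ(T)⟩`. -/
def HasBasisPartition {X : Type} (φ : FreeGroup X ≃* FreeGroup X)
    (A B : Subgroup (FreeGroup X)) : Prop :=
  ∃ S T : Set X, S ∪ T = Set.univ ∧ S ∩ T = ∅ ∧
    A = Subgroup.closure ((fun x => φ (FreeGroup.of x)) '' S) ∧
    B = Subgroup.closure ((fun x => φ (FreeGroup.of x)) '' T)

/-!
An elementary Nielsen transformation `ν` sends some basis letter `x` to `x` or `x⁻¹`: the
inverted letter `a` itself, or else the letter `b` in `a ↦ ab`, which is fixed. Then `x` lies in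
a factor of both splittings, and its (nontrivial) conjugacy class is a common neighbour of them
in `Z(F)`.
-/

lemma IsElemNielsen.exists_eq_or_eq_inv {X : Type} {ν : FreeGroup X ≃* FreeGroup X}
    (hν : IsElemNielsen ν) : ∃ x : X, ν (of x) = of x ∨ ν (of x) = (of x)⁻¹ := by
  obtain ⟨a, hfix, hinv | ⟨b, hba, -⟩⟩ := hν
  · exact ⟨a, Or.inr hinv⟩
  · exact ⟨b, Or.inl (hfix b hba)⟩

lemma HasBasisPartition.mem_or_mem {X : Type} {φ : FreeGroup X ≃* FreeGroup X}
    {A B : Subgroup (FreeGroup X)} (h : HasBasisPartition φ A B) (x : X) :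
    φ (of x) ∈ A ∨ φ (of x) ∈ B := by
  obtain ⟨S, T, hST, -, rfl, rfl⟩ := h
  have hx : x ∈ S ∪ T := hST ▸ Set.mem_univ x
  exact hx.imp (fun hS => Subgroup.subset_closure ⟨x, hS, rfl⟩)
    (fun hT => Subgroup.subset_closure ⟨x, hT, rfl⟩)

lemma HasBasisPartition.of_mem_or_mem_of_apply_eq {X : Type}
    {φ : FreeGroup X ≃* FreeGroup X}
    {A B : Subgroup (FreeGroup X)} (h : HasBasisPartition φ A B) {x : X}
    (hx : φ (of x) = of x ∨ φ (of x) = (of x)⁻¹) : of x ∈ A ∨ of x ∈ B := by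
  rcases hx with hx | hx <;> have hmem := h.mem_or_mem x <;> rw [hx] at hmem
  · exact hmem
  · simpa only [inv_mem_iff] using hmem

lemma elliptic_of_mem_or_mem {F : Type} [Group F] {A B : Subgroup F} {g : F}
    (h : g ∈ A ∨ g ∈ B) : Elliptic A B g :=
  ⟨1, by simpa only [one_mul, inv_one, mul_one] using h⟩

lemma ZGraph.adj_of_mem_or_mem {F : Type} [Group F] (s : ProperSplitting F)
    (c : {c : ConjClasses F // c ≠ ConjClasses.mk 1}) {g : F} (hgc : ConjClasses.mk g = c.1)
    (hg : g ∈ s.1.1 ∨ g ∈ s.1.2) :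
    (ZGraph F).Adj (Sum.inl (Quot.mk _ s)) (Sum.inr c) :=
  (SimpleGraph.fromRel_adj ..).mpr ⟨Sum.inl_ne_inr, Or.inl ⟨s, c, rfl, rfl, g, hgc, hg⟩⟩

lemma ZGraph.dist_le_two_of_mem_or_mem {F : Type} [Group F] (s₁ s₂ : ProperSplitting F)
    {g : F} (hg : g ≠ 1) (h₁ : g ∈ s₁.1.1 ∨ g ∈ s₁.1.2)
    (h₂ : g ∈ s₂.1.1 ∨ g ∈ s₂.1.2) :
    (ZGraph F).dist (Sum.inl (Quot.mk _ s₁)) (Sum.inl (Quot.mk _ s₂)) ≤ 2 := by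
  have hc : ConjClasses.mk g ≠ ConjClasses.mk 1 := by
    rwa [Ne, ConjClasses.mk_eq_mk_iff_isConj, isConj_one_left]
  let c : {c : ConjClasses F // c ≠ ConjClasses.mk 1} := ⟨ConjClasses.mk g, hc⟩
  have hadj₁ := ZGraph.adj_of_mem_or_mem s₁ c rfl h₁
  have hadj₂ := (ZGraph.adj_of_mem_or_mem s₂ c rfl h₂).symm
  exact (ZGraph F).dist_le (hadj₁.toWalk.append hadj₂.toWalk)

theorem nielsen_distance_two_general {X : Type}
    (A B C D : Subgroup (FreeGroup X)) (ν : FreeGroup X ≃* FreeGroup X)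
    (hAB : IsFreeSplitting A B) (hA : A ≠ ⊤) (hB : B ≠ ⊤)
    (hABX : HasBasisPartition (MulEquiv.refl (FreeGroup X)) A B)
    (hν : IsElemNielsen ν)
    (hCD : IsFreeSplitting C D) (hC : C ≠ ⊤) (hD : D ≠ ⊤)
    (hCDX : HasBasisPartition ν C D) :
    (∃ x : X, Elliptic A B (FreeGroup.of x) ∧ Elliptic C D (FreeGroup.of x)) ∧
    (ZGraph (FreeGroup X)).dist
      (Sum.inl (Quot.mk _ (⟨(A, B), hAB, hA, hB⟩ : ProperSplitting (FreeGroup X))))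
      (Sum.inl (Quot.mk _ (⟨(C, D), hCD, hC, hD⟩ : ProperSplitting (FreeGroup X)))) ≤ 2 := by
  obtain ⟨x, hx⟩ := hν.exists_eq_or_eq_inv
  have hxAB : of x ∈ A ∨ of x ∈ B := hABX.of_mem_or_mem_of_apply_eq (Or.inl rfl)
  have hxCD : of x ∈ C ∨ of x ∈ D := hCDX.of_mem_or_mem_of_apply_eq hx
  exact ⟨⟨x, elliptic_of_mem_or_mem hxAB, elliptic_of_mem_or_mem hxCD⟩,
    ZGraph.dist_le_two_of_mem_or_mem _ _ (of_ne_one x) hxAB hxCD⟩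

/-- If `|X| ≥ 2`, `A * B` is a (proper) free splitting with basis `X`,
`ν` is an elementary Nielsen transformation, and `C * D` is a (proper) free splitting
with basis `ν(X)`, then some `x ∈ X` is elliptic to both splittings; in particular the
distance between `[A*B]` and `[C*D]` in the ellipticity graph is at most two. -/
theorem nielsen_distance_two {X : Type} [Fintype X] (hcard : 2 ≤ Fintype.card X)
    (A B C D : Subgroup (FreeGroup X)) (ν : FreeGroup X ≃* FreeGroup X)
    (hAB : IsFreeSplitting A B) (hA : A ≠ ⊤) (hB : B ≠ ⊤)
    (hABX : HasBasisPartition (MulEquiv.refl (FreeGroup X)) A B)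
    (hν : IsElemNielsen ν)
    (hCD : IsFreeSplitting C D) (hC : C ≠ ⊤) (hD : D ≠ ⊤)
    (hCDX : HasBasisPartition ν C D) :
    (∃ x : X, Elliptic A B (FreeGroup.of x) ∧ Elliptic C D (FreeGroup.of x)) ∧
    (ZGraph (FreeGroup X)).dist
      (Sum.inl (Quot.mk _ (⟨(A, B), hAB, hA, hB⟩ : ProperSplitting (FreeGroup X))))
      (Sum.inl (Quot.mk _ (⟨(C, D), hCD, hC, hD⟩ : ProperSplitting (FreeGroup X)))) ≤ 2 :=
  nielsen_distance_two_general A B C D ν hAB hA hB hABX hν hCD hC hD hCDX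
end

section
/- Let Γ and Δ be folded X-digraphs with base vertices u and v respectively, and let Γ × Δ be their product digraph. Then Γ × Δ is folded and L(Γ × Δ, (u,v)) = L(Γ, u) ∩ L(Δ, v) as subgroups of the free group F(X). -/
/-- An `X`-digraph: a directed graph whose edges are labeled by elements of `X`. -/
structure XDigraph (X : Type) where
  V : Type
  E : Type
  o : E → V
  t : E → V
  lab : E → X

namespace XDigraph

variable {X : Type}

/-- `Γ` is folded: no vertex has two distinct outgoing edges with the same label, nor
two distinct incoming edges with the same label. -/
def Folded (Γ : XDigraph X) : Prop :=
  (∀ e f : Γ.E, Γ.o e = Γ.o f → Γ.lab e = Γ.lab f → e = f) ∧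
  (∀ e f : Γ.E, Γ.t e = Γ.t f → Γ.lab e = Γ.lab f → e = f)

/-- A directed edge of `Γ̂`: an edge of `Γ` together with a direction of traversal
(`true` = forwards, `false` = backwards). -/
abbrev DEdge (Γ : XDigraph X) : Type := Γ.E × Bool

/-- Origin of a directed edge. -/
def dO (Γ : XDigraph X) (d : DEdge Γ) : Γ.V := if d.2 then Γ.o d.1 else Γ.t d.1

/-- Terminus of a directed edge. -/
def dT (Γ : XDigraph X) (d : DEdge Γ) : Γ.V := if d.2 then Γ.t d.1 else Γ.o d.1

/-- `IsPath Γ u v p`: the list `p` of directed edges is a path from `u` to `v`. -/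
def IsPath (Γ : XDigraph X) : Γ.V → Γ.V → List (DEdge Γ) → Prop
  | u, v, [] => u = v
  | u, v, d :: p => Γ.dO d = u ∧ IsPath Γ (Γ.dT d) v p

/-- A path is reduced if it never immediately backtracks along the same edge. -/
def Reduced (Γ : XDigraph X) (p : List (DEdge Γ)) : Prop :=
  List.Chain' (fun d₁ d₂ => d₂ ≠ (d₁.1, !d₁.2)) p

/-- The label of a path, as an element of the free group `F(X)`: a reversed edge
contributes the inverse of its label. -/
def plabel (Γ : XDigraph X) (p : List (DEdge Γ)) : FreeGroup X :=
  FreeGroup.mk (p.map fun d => (Γ.lab d.1, d.2))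

/-- The language `L(Γ, v)`: labels of reduced closed paths at `v`. -/
def LSet (Γ : XDigraph X) (v : Γ.V) : Set (FreeGroup X) :=
  {g | ∃ p : List (DEdge Γ), Γ.IsPath v v p ∧ Γ.Reduced p ∧ g = Γ.plabel p}

/-- `Γ` is a core graph with respect to `v`: every vertex and every edge of `Γ` lies
on some reduced closed path at `v`. -/
def IsCore (Γ : XDigraph X) (v : Γ.V) : Prop :=
  (∀ u : Γ.V, u = v ∨ ∃ p : List (DEdge Γ), Γ.IsPath v v p ∧ Γ.Reduced p ∧
      ∃ d ∈ p, Γ.dO d = u ∨ Γ.dT d = u) ∧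
  (∀ e : Γ.E, ∃ p : List (DEdge Γ), Γ.IsPath v v p ∧ Γ.Reduced p ∧ ∃ b : Bool, (e, b) ∈ p)

/-- The product of two `X`-digraphs: vertices are pairs of vertices, edges are pairs of
equally-labeled edges. -/
def prod (Γ Δ : XDigraph X) : XDigraph X where
  V := Γ.V × Δ.V
  E := {ef : Γ.E × Δ.E // Γ.lab ef.1 = Δ.lab ef.2}
  o := fun ef => (Γ.o ef.1.1, Δ.o ef.1.2)
  t := fun ef => (Γ.t ef.1.1, Δ.t ef.1.2)
  lab := fun ef => Γ.lab ef.1.1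

/-- The edges of `Core(Γ, v)`: edges lying on some reduced closed path at `v`. -/
def CoreEdges (Γ : XDigraph X) (v : Γ.V) : Set Γ.E :=
  {e | ∃ p : List (DEdge Γ), Γ.IsPath v v p ∧ Γ.Reduced p ∧ ∃ b : Bool, (e, b) ∈ p}

/-- The edges of `Type(Γ) = ⋂_{u ∈ VΓ} Core(Γ, u)`. -/
def TypeEdges (Γ : XDigraph X) : Set Γ.E := ⋂ u : Γ.V, Γ.CoreEdges u

/-- The language of the subgraph of `Γ` spanned by the edge set `S`, at the vertex `v`:
labels of reduced closed paths at `v` using only edges of `S`. -/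
def LSetIn (Γ : XDigraph X) (S : Set Γ.E) (v : Γ.V) : Set (FreeGroup X) :=
  {g | ∃ p : List (DEdge Γ), Γ.IsPath v v p ∧ Γ.Reduced p ∧
    (∀ d ∈ p, d.1 ∈ S) ∧ g = Γ.plabel p}

end XDigraph

/-! A reduced path in a folded graph reads a reduced word, and conversely a path reading a reduced
word is reduced; since distinct reduced words are distinct elements of `F(X)`, `L(Γ, v)` is the set
of reduced words read along closed paths at `v`. A word is read along a closed path of `Γ × Δ` at
`(u, v)` iff it is read along closed paths at `u` and at `v`, the product path being the pair of
the two factor paths. -/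

namespace FreeGroup

theorem IsReduced.eq_of_mk_eq {α : Type*} {L₁ L₂ : List (α × Bool)} (h₁ : IsReduced L₁)
    (h₂ : IsReduced L₂) (h : mk L₁ = mk L₂) : L₁ = L₂ := by
  classical
  simpa [toWord_mk, h₁.reduce_eq, h₂.reduce_eq] using congrArg toWord h

end FreeGroup

namespace XDigraph

open FreeGroup (IsReduced isReduced_cons_cons)

variable {X : Type}

def word (Γ : XDigraph X) (p : List (DEdge Γ)) : List (X × Bool) :=
  p.map fun d => (Γ.lab d.1, d.2)

section Reduced

variable {Γ : XDigraph X}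

theorem reduced_of_isReduced_word {p : List (DEdge Γ)} (h : IsReduced (Γ.word p)) :
    Γ.Reduced p := by
  refine (List.isChain_map _).1 h |>.imp fun d₁ d₂ hd heq => ?_
  subst heq
  simpa using hd rfl

theorem Folded.eq_reverse_of_lab_eq (hΓ : Γ.Folded) {d₁ d₂ : DEdge Γ} (hpath : Γ.dT d₁ = Γ.dO d₂)
    (hlab : Γ.lab d₁.1 = Γ.lab d₂.1) (hdir : d₁.2 ≠ d₂.2) : d₂ = (d₁.1, !d₁.2) := by
  obtain ⟨e₁, b₁⟩ := d₁
  obtain ⟨e₂, b₂⟩ := d₂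
  cases b₁ <;> cases b₂ <;> simp only [ne_eq, not_true_eq_false] at hdir <;>
    simp only [dT, dO, Bool.false_eq_true, ↓reduceIte] at hpath
  · rw [hΓ.1 e₂ e₁ hpath.symm hlab.symm]; rfl
  · rw [hΓ.2 e₂ e₁ hpath.symm hlab.symm]; rfl

theorem Folded.isReduced_word (hΓ : Γ.Folded) :
    ∀ {a b : Γ.V} {p : List (DEdge Γ)}, Γ.IsPath a b p → Γ.Reduced p → IsReduced (Γ.word p)
  | _, _, [], _, _ => IsReduced.nil
  | _, _, [_], _, _ => IsReduced.singleton
  | _, _, d₁ :: d₂ :: p, ⟨_, hpath⟩, hred => by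
    replace hred := List.isChain_cons_cons.1 hred
    refine isReduced_cons_cons.2 ⟨fun hlab => ?_, hΓ.isReduced_word hpath hred.2⟩
    by_contra hdir
    exact hred.1 (hΓ.eq_reverse_of_lab_eq hpath.1.symm hlab hdir)

end Reduced

section Product

variable {Γ Δ : XDigraph X}

theorem Folded.prod (hΓ : Γ.Folded) (hΔ : Δ.Folded) : (Γ.prod Δ).Folded := by
  have lab_snd (e : (Γ.prod Δ).E) : Δ.lab e.1.2 = (Γ.prod Δ).lab e := e.2.symm
  refine ⟨fun e f ho hl => ?_, fun e f ht hl => ?_⟩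
  · exact Subtype.ext <| Prod.ext (hΓ.1 _ _ (congrArg Prod.fst ho) hl)
      (hΔ.1 _ _ (congrArg Prod.snd ho) (by rw [lab_snd, lab_snd, hl]))
  · exact Subtype.ext <| Prod.ext (hΓ.2 _ _ (congrArg Prod.fst ht) hl)
      (hΔ.2 _ _ (congrArg Prod.snd ht) (by rw [lab_snd, lab_snd, hl]))

def fstPath (r : List (DEdge (Γ.prod Δ))) : List (DEdge Γ) := r.map fun d => (d.1.1.1, d.2)

def sndPath (r : List (DEdge (Γ.prod Δ))) : List (DEdge Δ) := r.map fun d => (d.1.1.2, d.2)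

theorem word_fstPath (r : List (DEdge (Γ.prod Δ))) : Γ.word (fstPath r) = (Γ.prod Δ).word r := by
  simp only [word, fstPath, List.map_map]
  rfl

theorem word_sndPath (r : List (DEdge (Γ.prod Δ))) : Δ.word (sndPath r) = (Γ.prod Δ).word r := by
  simp only [word, sndPath, List.map_map]
  exact List.map_congr_left fun d _ => by simp [Function.comp, prod, d.1.2]

theorem plabel_fstPath (r : List (DEdge (Γ.prod Δ))) :
    Γ.plabel (fstPath r) = (Γ.prod Δ).plabel r :=
  congrArg FreeGroup.mk (word_fstPath r)

theorem plabel_sndPath (r : List (DEdge (Γ.prod Δ))) :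
    Δ.plabel (sndPath r) = (Γ.prod Δ).plabel r :=
  congrArg FreeGroup.mk (word_sndPath r)

theorem dO_prod (d : DEdge (Γ.prod Δ)) :
    (Γ.prod Δ).dO d = (Γ.dO (d.1.1.1, d.2), Δ.dO (d.1.1.2, d.2)) := by
  obtain ⟨e, b⟩ := d
  cases b <;> rfl

theorem dT_prod (d : DEdge (Γ.prod Δ)) :
    (Γ.prod Δ).dT d = (Γ.dT (d.1.1.1, d.2), Δ.dT (d.1.1.2, d.2)) := by
  obtain ⟨e, b⟩ := d
  cases b <;> rfl

theorem isPath_prod_iff :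
    ∀ {a a' : Γ.V} {b b' : Δ.V} {r : List (DEdge (Γ.prod Δ))},
      (Γ.prod Δ).IsPath (a, b) (a', b') r ↔ Γ.IsPath a a' (fstPath r) ∧ Δ.IsPath b b' (sndPath r)
  | _, _, _, _, [] => Prod.ext_iff
  | _, _, _, _, d :: r => by
    simp only [IsPath, dO_prod, dT_prod]
    exact (and_congr Prod.ext_iff isPath_prod_iff).trans and_and_and_comm

theorem exists_fstPath_sndPath_eq :
    ∀ {p : List (DEdge Γ)} {q : List (DEdge Δ)}, Γ.word p = Δ.word q →
      ∃ r : List (DEdge (Γ.prod Δ)), fstPath r = p ∧ sndPath r = q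
  | [], [], _ => ⟨[], rfl, rfl⟩
  | d :: p, e :: q, h => by
    simp only [word, List.map_cons, List.cons.injEq, Prod.ext_iff] at h
    obtain ⟨⟨hlab, hdir⟩, hw⟩ := h
    obtain ⟨r, rfl, rfl⟩ := exists_fstPath_sndPath_eq hw
    refine ⟨(⟨(d.1, e.1), hlab⟩, d.2) :: r, rfl, ?_⟩
    simp only [sndPath, List.map_cons, hdir]

end Product

end XDigraph

open XDigraph in
/-- If `Γ` and `Δ` are folded `X`-digraphs with base vertices `u`, `v`,
then the product `Γ × Δ` is folded and `L(Γ × Δ, (u,v)) = L(Γ, u) ∩ L(Δ, v)`. -/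
theorem product_language {X : Type} (Γ Δ : XDigraph X) (u : Γ.V) (v : Δ.V)
    (hΓ : Γ.Folded) (hΔ : Δ.Folded) :
    (Γ.prod Δ).Folded ∧ (Γ.prod Δ).LSet (u, v) = Γ.LSet u ∩ Δ.LSet v := by
  have hΓΔ := hΓ.prod hΔ
  refine ⟨hΓΔ, Set.ext fun g => ⟨?_, ?_⟩⟩
  · rintro ⟨r, hr, hred, rfl⟩
    obtain ⟨hp, hq⟩ := isPath_prod_iff.1 hr
    have hw := hΓΔ.isReduced_word hr hred
    exact ⟨⟨fstPath r, hp, reduced_of_isReduced_word (by rwa [word_fstPath]),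
        (plabel_fstPath r).symm⟩,
      ⟨sndPath r, hq, reduced_of_isReduced_word (by rwa [word_sndPath]), (plabel_sndPath r).symm⟩⟩
  · rintro ⟨⟨p, hp, hpred, rfl⟩, ⟨q, hq, hqred, hpq⟩⟩
    have hwp := hΓ.isReduced_word hp hpred
    have hw : Γ.word p = Δ.word q := hwp.eq_of_mk_eq (hΔ.isReduced_word hq hqred) hpq
    obtain ⟨r, rfl, rfl⟩ := exists_fstPath_sndPath_eq hw
    rw [word_fstPath] at hwp
    exact ⟨r, isPath_prod_iff.2 ⟨hp, hq⟩, reduced_of_isReduced_word hwp, plabel_fstPath r⟩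
end

section
/- Let F = F(X) be a free group, let (v,w) be a disjoint pair of cyclic words (i.e., X = L(v) ⊔ L(w)), and let τ₁ be a Whitehead automorphism with multiplier a ∈ Λ(v) such that |τ₁(v)| + |τ₁(w)| < |v| + |w|. Define τ on X by τ(x) = τ₁(x) for x ∈ L(v) and τ(x) = x for x ∈ L(w). Then τ is a well-defined Whitehead automorphism, τ(v) = τ₁(v), τ(w) = w, |τ(v)| + |τ(w)| < |v| + |w|, and (τ(v), τ(w)) is disjoint. -/
open FreeGroup

/-!
The automorphism `τ` is `τ₁` on the letters of `v` and the identity on those of `w`. It is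
invertible because `τ₁` and `τ₁⁻¹` both preserve the subgroup `F(L(v))`: the multiplier is a
letter of `v`, and `τ₁` fixes it. Every cyclically reduced conjugate of an element of `F(S)`
again lies in `F(S)` (count a letter outside `S` in high powers), so `τ₁(v)` only involves
letters of `v`, whence disjointness. Finally `|τ₁(w)| ≥ |w|`: erasing the
multiplier letter shortens no word, cancels the effect of `τ₁`, and fixes `w`.
-/

namespace FreeGroup

variable {α : Type*}

theorem mk_singleton_eq_or (p : α × Bool) : mk [p] = of p.1 ∨ mk [p] = (of p.1)⁻¹ := by
  rcases p with ⟨x, _ | _⟩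
  · exact Or.inr (by simp [of, inv_mk, invRev])
  · exact Or.inl rfl

theorem of_ne_mul_self (x : α) (g : FreeGroup α) : of x ≠ g * g := by
  intro h
  have parity : ∀ y : Multiplicative (ZMod 2), Multiplicative.ofAdd 1 ≠ y * y := by decide
  let χ : FreeGroup α →* Multiplicative (ZMod 2) := lift fun _ => Multiplicative.ofAdd 1
  exact parity (χ g) (by rw [← _root_.map_mul, ← h, lift_apply_of])

def letterSubgroup (S : Set α) : Subgroup (FreeGroup α) := Subgroup.closure (of '' S)

theorem of_mem_letterSubgroup {S : Set α} {x : α} (hx : x ∈ S) : of x ∈ letterSubgroup S :=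
  Subgroup.subset_closure ⟨x, hx, rfl⟩

theorem eqOn_letterSubgroup {M : Type*} [Monoid M] {S : Set α} {f g : FreeGroup α →* M}
    (h : ∀ x ∈ S, f (of x) = g (of x)) : Set.EqOn f g (letterSubgroup S) :=
  MonoidHom.eqOn_closure (by rintro _ ⟨x, hx, rfl⟩; exact h x hx)

theorem mk_mem_letterSubgroup {S : Set α} :
    ∀ {l : List (α × Bool)}, (∀ p ∈ l, p.1 ∈ S) → mk l ∈ letterSubgroup S
  | [], _ => one_mem _
  | p :: t, h => by
    rw [← List.singleton_append, ← mul_mk]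
    refine mul_mem ?_ (mk_mem_letterSubgroup fun q hq => h q (List.mem_cons_of_mem _ hq))
    have hp := of_mem_letterSubgroup (h p List.mem_cons_self)
    rcases mk_singleton_eq_or p with e | e <;> rw [e]
    exacts [hp, inv_mem hp]

theorem mul_of_mul_mem_letterSubgroup {S : Set α} {y x : α} (hy : y ∈ S) (hx : x ∈ S)
    {u u' : FreeGroup α} (hu : u ∈ Subgroup.zpowers (of y))
    (hu' : u' ∈ Subgroup.zpowers (of y)) :
    u * of x * u' ∈ letterSubgroup S :=
  have hpow := Subgroup.zpowers_le.2 (of_mem_letterSubgroup hy)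
  mul_mem (mul_mem (hpow hu) (of_mem_letterSubgroup hx)) (hpow hu')

theorem map_mem_letterSubgroup {S : Set α} {φ : FreeGroup α →* FreeGroup α}
    (hφ : ∀ x ∈ S, φ (of x) ∈ letterSubgroup S) {g : FreeGroup α} (hg : g ∈ letterSubgroup S) :
    φ g ∈ letterSubgroup S :=
  (Subgroup.closure_le (K := (letterSubgroup S).comap φ)).2
    (by rintro _ ⟨x, hx, rfl⟩; exact hφ x hx) hg

section Piecewise

variable (S : Set α) [DecidablePred (· ∈ S)]

def piecewiseHom (φ : FreeGroup α →* FreeGroup α) : FreeGroup α →* FreeGroup α :=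
  lift fun x => if x ∈ S then φ (of x) else of x

variable {S}

theorem piecewiseHom_of (φ : FreeGroup α →* FreeGroup α) (x : α) :
    piecewiseHom S φ (of x) = if x ∈ S then φ (of x) else of x :=
  lift_apply_of

theorem piecewiseHom_eqOn (φ : FreeGroup α →* FreeGroup α) :
    Set.EqOn (piecewiseHom S φ) φ (letterSubgroup S) :=
  eqOn_letterSubgroup fun x hx => by rw [piecewiseHom_of, if_pos hx]

theorem piecewiseHom_eqOn_of_disjoint {T : Set α} (h : Disjoint S T)
    (φ : FreeGroup α →* FreeGroup α) :
    Set.EqOn (piecewiseHom S φ) (MonoidHom.id _) (letterSubgroup T) :=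
  eqOn_letterSubgroup fun x hx => by
    rw [piecewiseHom_of, if_neg (h.notMem_of_mem_right hx), MonoidHom.id_apply]

theorem piecewiseHom_comp {φ ψ : FreeGroup α →* FreeGroup α}
    (hφ : ∀ x ∈ S, φ (of x) ∈ letterSubgroup S) (hψφ : ∀ x ∈ S, ψ (φ (of x)) = of x) :
    (piecewiseHom S ψ).comp (piecewiseHom S φ) = MonoidHom.id _ := by
  ext x
  by_cases hx : x ∈ S
  · simp only [MonoidHom.comp_apply, piecewiseHom_of, if_pos hx, MonoidHom.id_apply]
    rw [piecewiseHom_eqOn ψ (hφ x hx), hψφ x hx]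
  · simp [piecewiseHom_of, hx]

def piecewiseEquiv (φ : FreeGroup α ≃* FreeGroup α)
    (hφ : ∀ x ∈ S, φ (of x) ∈ letterSubgroup S)
    (hφ' : ∀ x ∈ S, φ.symm (of x) ∈ letterSubgroup S) :
    FreeGroup α ≃* FreeGroup α :=
  MonoidHom.toMulEquiv (piecewiseHom S φ) (piecewiseHom S φ.symm)
    (piecewiseHom_comp hφ fun _ _ => φ.symm_apply_apply _)
    (piecewiseHom_comp hφ' fun _ _ => φ.apply_symm_apply _)

end Piecewise

variable [DecidableEq α]

theorem mem_letterSubgroup_iff {S : Set α} {g : FreeGroup α} :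
    g ∈ letterSubgroup S ↔ ∀ p ∈ g.toWord, p.1 ∈ S := by
  refine ⟨fun hg => ?_, fun h => mk_toWord (x := g) ▸ mk_mem_letterSubgroup h⟩
  induction hg using Subgroup.closure_induction with
  | mem _ hx =>
    obtain ⟨x, hx, rfl⟩ := hx
    simpa using hx
  | one => simp
  | mul g h _ _ hg hh =>
    intro p hp
    rcases List.mem_append.1 ((toWord_mul_sublist g h).subset hp) with hp | hp
    exacts [hg p hp, hh p hp]
  | inv g _ hg =>
    intro p hp
    simp only [toWord_inv, invRev, List.mem_reverse, List.mem_map] at hp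
    obtain ⟨q, hq, rfl⟩ := hp
    exact hg q hq

def letterCount (x : α) (g : FreeGroup α) : ℕ := g.toWord.countP (·.1 = x)

theorem letterCount_mul_le (x : α) (g h : FreeGroup α) :
    letterCount x (g * h) ≤ letterCount x g + letterCount x h := by
  unfold letterCount
  rw [← List.countP_append]
  exact (toWord_mul_sublist g h).countP_le

theorem letterCount_inv (x : α) (g : FreeGroup α) : letterCount x g⁻¹ = letterCount x g := by
  simp [letterCount, invRev, List.countP_map, Function.comp_def]

theorem letterCount_pos {x : α} {b : Bool} {g : FreeGroup α} (h : (x, b) ∈ g.toWord) :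
    0 < letterCount x g :=
  List.countP_pos_iff.2 ⟨_, h, by simp⟩

theorem letterCount_eq_zero {S : Set α} {x : α} {g : FreeGroup α} (hx : x ∉ S)
    (hg : g ∈ letterSubgroup S) : letterCount x g = 0 :=
  List.countP_eq_zero.2 fun p hp hpx =>
    hx (of_decide_eq_true hpx ▸ mem_letterSubgroup_iff.1 hg p hp)

theorem letterCount_pow {g : FreeGroup α} (hg : IsCyclicallyReduced g.toWord) (x : α) (n : ℕ) :
    letterCount x (g ^ n) = n * letterCount x g := by
  rw [letterCount, toWord_pow, ((hg.flatten_replicate n).isReduced).reduce_eq]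
  simp [letterCount, List.countP_flatten]

theorem mem_letterSubgroup_of_isConj {S : Set α} {g u : FreeGroup α}
    (hg : IsCyclicallyReduced g.toWord) (hug : IsConj u g) (hu : u ∈ letterSubgroup S) :
    g ∈ letterSubgroup S := by
  refine mem_letterSubgroup_iff.2 fun p hp => by_contra fun hpS => ?_
  obtain ⟨c, rfl⟩ := isConj_iff.1 hug
  -- `p.1` occurs at least `n` times in the cyclically reduced word `g ^ n`, but
  -- `c * u ^ n * c⁻¹` can only contain the occurrences coming from `c` and `c⁻¹`.
  set n := 2 * letterCount p.1 c + 1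
  have upper : letterCount p.1 ((c * u * c⁻¹) ^ n) ≤ 2 * letterCount p.1 c := calc
    letterCount p.1 ((c * u * c⁻¹) ^ n) = letterCount p.1 (c * u ^ n * c⁻¹) := by rw [conj_pow]
    _ ≤ letterCount p.1 c + letterCount p.1 (u ^ n) + letterCount p.1 c⁻¹ :=
      (letterCount_mul_le _ _ _).trans (Nat.add_le_add_right (letterCount_mul_le _ _ _) _)
    _ = 2 * letterCount p.1 c := by
      rw [letterCount_eq_zero hpS (pow_mem hu n), letterCount_inv]; ring
  have lower : n ≤ letterCount p.1 ((c * u * c⁻¹) ^ n) := by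
    rw [letterCount_pow hg]
    exact Nat.le_mul_of_pos_right n (letterCount_pos hp)
  omega

theorem norm_map_le {β : Type*} [DecidableEq β] (φ : FreeGroup α →* FreeGroup β)
    (hφ : ∀ x, (φ (of x)).norm ≤ 1) (g : FreeGroup α) : (φ g).norm ≤ g.norm := by
  suffices ∀ l : List (α × Bool), (φ (mk l)).norm ≤ l.length by
    have := this g.toWord
    rwa [mk_toWord] at this
  intro l
  induction l with
  | nil => simp [← one_eq_mk]
  | cons p t ih =>
    rw [← List.singleton_append, ← mul_mk, _root_.map_mul, List.length_append]
    refine (norm_mul_le _ _).trans (add_le_add ?_ ih)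
    rcases mk_singleton_eq_or p with e | e <;> simpa [e] using hφ p.1

end FreeGroup

section CyclicWords

variable {X : Type} [DecidableEq X]

theorem isCycRed_iff {g : FreeGroup X} : IsCycRed g ↔ IsCyclicallyReduced g.toWord := by
  rw [isCyclicallyReduced_iff, and_iff_right isReduced_toWord]
  constructor
  · intro h p hp q hq hpq
    by_contra hne
    refine h q hq (Option.mem_def.1 hp ▸ congrArg some (Prod.ext hpq ?_))
    exact Bool.eq_not_iff.2 hne
  · intro h q hq hp
    simpa using h _ hp q hq rfl

theorem exists_isCycRed_mk_eq (c : ConjClasses (FreeGroup X)) :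
    ∃ g, ConjClasses.mk g = c ∧ IsCycRed g := by
  obtain ⟨g₀, rfl⟩ := ConjClasses.mk_surjective c
  have hred := reduceCyclically.isCyclicallyReduced (isReduced_toWord (x := g₀))
  refine ⟨mk (reduceCyclically g₀.toWord), ConjClasses.mk_eq_mk_iff_isConj.2 ?_, ?_⟩
  · refine isConj_iff.2 ⟨mk (reduceCyclically.conjugator g₀.toWord), ?_⟩
    rw [inv_mk, mul_mk, mul_mk, reduceCyclically.conj_conjugator_reduceCyclically, mk_toWord]
  · rwa [isCycRed_iff, toWord_mk, hred.isReduced.reduce_eq]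

theorem cycLen_le {c : ConjClasses (FreeGroup X)} {g : FreeGroup X}
    (hg : ConjClasses.mk g = c) : cycLen c ≤ g.norm :=
  Nat.sInf_le ⟨g, hg, rfl⟩

theorem exists_norm_eq_cycLen (c : ConjClasses (FreeGroup X)) :
    ∃ g, ConjClasses.mk g = c ∧ g.norm = cycLen c :=
  let ⟨g, hg⟩ := ConjClasses.exists_rep c
  Nat.sInf_mem (s := {n | ∃ g : FreeGroup X, ConjClasses.mk g = c ∧ g.toWord.length = n})
    ⟨_, g, hg, rfl⟩

theorem cycLen_map_le {Y : Type} [DecidableEq Y] (φ : FreeGroup X →* FreeGroup Y)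
    (hφ : ∀ x, (φ (of x)).norm ≤ 1) (c : ConjClasses (FreeGroup X)) :
    cycLen (ConjClasses.map φ c) ≤ cycLen c := by
  obtain ⟨g, rfl, hg⟩ := exists_norm_eq_cycLen c
  exact (cycLen_le rfl).trans (hg ▸ norm_map_le φ hφ g)

theorem mem_letterSubgroup_usedLetters {c : ConjClasses (FreeGroup X)} {g : FreeGroup X}
    (hg : ConjClasses.mk g = c) (hred : IsCycRed g) : g ∈ letterSubgroup (usedLetters c) :=
  mem_letterSubgroup_iff.2 fun p hp => ⟨g, hg, hred, p.2, hp⟩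

theorem usedLetters_subset {c : ConjClasses (FreeGroup X)} {S : Set X} {g : FreeGroup X}
    (hg : ConjClasses.mk g = c) (hS : g ∈ letterSubgroup S) : usedLetters c ⊆ S := by
  rintro x ⟨g', hg', hred, b, hb⟩
  have hconj : IsConj g g' := ConjClasses.mk_eq_mk_iff_isConj.1 (hg.trans hg'.symm)
  exact mem_letterSubgroup_iff.1
    (mem_letterSubgroup_of_isConj (isCycRed_iff.1 hred) hconj hS) _ hb

end CyclicWords

namespace IsWhiteheadMult

variable {X : Type} {a : X × Bool} {τ : FreeGroup X ≃* FreeGroup X}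

theorem apply_of_fst (h : IsWhiteheadMult a τ) : τ (of a.1) = of a.1 := by
  -- the other three candidate images of `of a.1` are squares, which a generator's image is not
  have not_sq : ∀ g, τ (of a.1) ≠ g * g := fun g hg =>
    of_ne_mul_self a.1 (τ.symm g) (by rw [← _root_.map_mul, ← hg, τ.symm_apply_apply])
  have h := h a.1
  simp only [Set.mem_insert_iff, Set.mem_singleton_iff] at h
  rcases mk_singleton_eq_or a with e | e <;> rcases h with h | h | h | h <;>
    (try simp only [e, inv_inv, mul_inv_cancel, inv_mul_cancel, one_mul,
      mul_inv_cancel_right] at h)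
  all_goals first
    | exact h
    | exact absurd h (not_sq _)
    | exact absurd (h.trans (one_mul 1).symm) (not_sq 1)

theorem exists_zpowers (h : IsWhiteheadMult a τ) (x : X) :
    ∃ u ∈ Subgroup.zpowers (of a.1), ∃ u' ∈ Subgroup.zpowers (of a.1),
      τ (of x) = u * of x * u' := by
  have hA : mk [a] ∈ Subgroup.zpowers (of a.1) := by
    rcases mk_singleton_eq_or a with e | e <;> rw [e]
    exacts [Subgroup.mem_zpowers _, inv_mem (Subgroup.mem_zpowers _)]
  rcases h x with h | h | h | h
  · exact ⟨1, one_mem _, 1, one_mem _, by simp [h]⟩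
  · exact ⟨1, one_mem _, _, hA, by simp [h]⟩
  · exact ⟨_, inv_mem hA, 1, one_mem _, by simp [h]⟩
  · exact ⟨_, inv_mem hA, _, hA, h⟩

theorem apply_eq_self_of_mem_zpowers (h : IsWhiteheadMult a τ) {u : FreeGroup X}
    (hu : u ∈ Subgroup.zpowers (of a.1)) : τ u = u := by
  obtain ⟨n, rfl⟩ := Subgroup.mem_zpowers_iff.1 hu
  rw [map_zpow, h.apply_of_fst]

theorem exists_zpowers_symm (h : IsWhiteheadMult a τ) (x : X) :
    ∃ u ∈ Subgroup.zpowers (of a.1), ∃ u' ∈ Subgroup.zpowers (of a.1),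
      τ.symm (of x) = u * of x * u' := by
  obtain ⟨u, hu, u', hu', e⟩ := h.exists_zpowers x
  refine ⟨u⁻¹, inv_mem hu, u'⁻¹, inv_mem hu', τ.symm_apply_eq.2 ?_⟩
  rw [_root_.map_mul, _root_.map_mul, _root_.map_inv, _root_.map_inv,
    h.apply_eq_self_of_mem_zpowers hu, h.apply_eq_self_of_mem_zpowers hu', e]
  group

theorem apply_of_mem_letterSubgroup (h : IsWhiteheadMult a τ) {S : Set X} (ha : a.1 ∈ S)
    {x : X} (hx : x ∈ S) : τ (of x) ∈ letterSubgroup S := by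
  obtain ⟨u, hu, u', hu', e⟩ := h.exists_zpowers x
  exact e ▸ mul_of_mul_mem_letterSubgroup ha hx hu hu'

theorem symm_apply_of_mem_letterSubgroup (h : IsWhiteheadMult a τ) {S : Set X} (ha : a.1 ∈ S)
    {x : X} (hx : x ∈ S) : τ.symm (of x) ∈ letterSubgroup S := by
  obtain ⟨u, hu, u', hu', e⟩ := h.exists_zpowers_symm x
  exact e ▸ mul_of_mul_mem_letterSubgroup ha hx hu hu'

theorem piecewiseEquiv (h : IsWhiteheadMult a τ) (S : Set X) [DecidablePred (· ∈ S)]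
    (ha : a.1 ∈ S) :
    IsWhiteheadMult a (FreeGroup.piecewiseEquiv τ (fun _ => h.apply_of_mem_letterSubgroup ha)
      (fun _ => h.symm_apply_of_mem_letterSubgroup ha)) := by
  intro x
  change piecewiseHom S τ (of x) ∈ _
  rw [piecewiseHom_of]
  split_ifs
  exacts [h x, Set.mem_insert _ _]

/-- Erasing the letter `a.1` undoes `τ`, does not increase lengths, and fixes a cyclic word
not involving `a.1`. -/
theorem cycLen_le_cycLen_actC [DecidableEq X] (h : IsWhiteheadMult a τ)
    {w : ConjClasses (FreeGroup X)} (ha : a.1 ∉ usedLetters w) :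
    cycLen w ≤ cycLen (actC τ w) := by
  let erase := piecewiseHom {a.1} 1
  have erase_of : ∀ x, erase (of x) = if x = a.1 then 1 else of x := fun x => piecewiseHom_of 1 x
  have erase_comp : erase.comp τ.toMonoidHom = erase := by
    ext x
    obtain ⟨u, hu, u', hu', e⟩ := h.exists_zpowers x
    have hpow : Subgroup.zpowers (of a.1) ≤ erase.ker :=
      Subgroup.zpowers_le.2 (by simp [erase_of])
    simp [e, MonoidHom.mem_ker.1 (hpow hu), MonoidHom.mem_ker.1 (hpow hu')]
  obtain ⟨g, rfl, hred⟩ := exists_isCycRed_mk_eq w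
  have erase_g : erase g = g := piecewiseHom_eqOn_of_disjoint
    (Set.disjoint_singleton_left.2 ha) 1 (mem_letterSubgroup_usedLetters rfl hred)
  have erase_actC : ConjClasses.map erase (actC τ (ConjClasses.mk g)) = ConjClasses.mk g :=
    congrArg ConjClasses.mk ((DFunLike.congr_fun erase_comp g).trans erase_g)
  calc cycLen (ConjClasses.mk g)
      = cycLen (ConjClasses.map erase (actC τ (ConjClasses.mk g))) := by rw [erase_actC]
    _ ≤ cycLen (actC τ (ConjClasses.mk g)) :=
      cycLen_map_le erase (fun x => by rw [erase_of]; split_ifs <;> simp) _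

end IsWhiteheadMult

theorem disjoint_pair_reduction_general {X : Type} [DecidableEq X]
    (v w : ConjClasses (FreeGroup X)) (a : X × Bool) (τ₁ : FreeGroup X ≃* FreeGroup X)
    (hpart_disj : usedLetters v ∩ usedLetters w = ∅)
    (hτ₁ : IsWhiteheadMult a τ₁) (ha : a.1 ∈ usedLetters v)
    (hdec : cycLen (actC τ₁ v) + cycLen (actC τ₁ w) < cycLen v + cycLen w) :
    ∃ τ : FreeGroup X ≃* FreeGroup X, IsWhiteheadMult a τ ∧
      (∀ x ∈ usedLetters v, τ (of x) = τ₁ (of x)) ∧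
      (∀ x ∈ usedLetters w, τ (of x) = of x) ∧
      actC τ v = actC τ₁ v ∧ actC τ w = w ∧
      cycLen (actC τ v) + cycLen (actC τ w) < cycLen v + cycLen w ∧
      usedLetters (actC τ v) ∩ usedLetters (actC τ w) = ∅ := by
  classical
  have hdisj : Disjoint (usedLetters v) (usedLetters w) :=
    Set.disjoint_iff_inter_eq_empty.2 hpart_disj
  obtain ⟨gv, rfl, hgv⟩ := exists_isCycRed_mk_eq v
  obtain ⟨gw, rfl, hgw⟩ := exists_isCycRed_mk_eq w
  have hgvS := mem_letterSubgroup_usedLetters rfl hgv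
  let τ := piecewiseEquiv τ₁ (fun _ => hτ₁.apply_of_mem_letterSubgroup ha)
    (fun _ => hτ₁.symm_apply_of_mem_letterSubgroup ha)
  have hτv : actC τ (.mk gv) = actC τ₁ (.mk gv) :=
    congrArg ConjClasses.mk (piecewiseHom_eqOn _ hgvS)
  have hτw : actC τ (.mk gw) = .mk gw :=
    congrArg ConjClasses.mk
      (piecewiseHom_eqOn_of_disjoint hdisj _ (mem_letterSubgroup_usedLetters rfl hgw))
  have hw_le := hτ₁.cycLen_le_cycLen_actC (hdisj.notMem_of_mem_left ha)
  refine ⟨τ, hτ₁.piecewiseEquiv _ ha, fun x hx => (piecewiseHom_of _ x).trans (if_pos hx),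
    fun x hx => (piecewiseHom_of _ x).trans (if_neg (hdisj.notMem_of_mem_right hx)), hτv, hτw,
    by rw [hτv, hτw]; omega, ?_⟩
  rw [hτv, hτw, ← Set.disjoint_iff_inter_eq_empty]
  have hτ₁v := map_mem_letterSubgroup (φ := τ₁.toMonoidHom)
    (fun _ => hτ₁.apply_of_mem_letterSubgroup ha) hgvS
  exact hdisj.mono_left (usedLetters_subset rfl hτ₁v)

/-- Let `(v, w)` be a disjoint pair of cyclic words (`X = L(v) ⊔ L(w)`),
and let `τ₁` be a Whitehead automorphism with multiplier `a ∈ Λ(v)` which strictly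
decreases the total length. Then the automorphism `τ` agreeing with `τ₁` on `L(v)` and
fixing `L(w)` is a well-defined Whitehead automorphism with multiplier `a`, it satisfies
`τ(v) = τ₁(v)` and `τ(w) = w`, it strictly decreases the total length, and
`(τ(v), τ(w))` is disjoint. -/
theorem disjoint_pair_reduction {X : Type} [DecidableEq X]
    (v w : ConjClasses (FreeGroup X)) (a : X × Bool) (τ₁ : FreeGroup X ≃* FreeGroup X)
    (hpart_union : usedLetters v ∪ usedLetters w = Set.univ)
    (hpart_disj : usedLetters v ∩ usedLetters w = ∅)
    (hτ₁ : IsWhiteheadMult a τ₁) (ha : a.1 ∈ usedLetters v)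
    (hdec : cycLen (actC τ₁ v) + cycLen (actC τ₁ w) < cycLen v + cycLen w) :
    ∃ τ : FreeGroup X ≃* FreeGroup X, IsWhiteheadMult a τ ∧
      (∀ x ∈ usedLetters v, τ (of x) = τ₁ (of x)) ∧
      (∀ x ∈ usedLetters w, τ (of x) = of x) ∧
      actC τ v = actC τ₁ v ∧ actC τ w = w ∧
      cycLen (actC τ v) + cycLen (actC τ w) < cycLen v + cycLen w ∧
      usedLetters (actC τ v) ∩ usedLetters (actC τ w) = ∅ :=
  disjoint_pair_reduction_general v w a τ₁ hpart_disj hτ₁ ha hdec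
end

section
/- Let Γ be a finite folded X-digraph that is core with respect to a vertex v, and suppose L(Γ, v) contains a nontrivial cyclically reduced element. Then Type(Γ) = Γ, i.e., Core(Γ, u) = Γ for every vertex u of Γ. -/
/-!
Let `p` be a reduced loop at `v` whose label is cyclically reduced. Since `Γ` is folded, the label
of `p` is the word read along `p`, so `p ++ p` is still reduced. From any vertex `w` on `p` there
are then two reduced routes back to `v` along `p` (the rest of `p` followed by `p`, or the start
of `p` preceded by `p`, backwards), and they end in different edges. Given `u`, take a shortest
reduced path `r` from `u` to the vertices of `p`; its last edge is not an edge of `p`. Every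
reduced loop `Q` at `v` then lies on the reduced loop `r B Q C⁻¹ r⁻¹` at `u`, where the routes
`B` and `C` are chosen so as not to backtrack into `Q`. As `Γ` is core at `v`, it is core at `u`.
-/

namespace XDigraph

variable {X : Type} {Γ : XDigraph X}

def flipD (d : DEdge Γ) : DEdge Γ := (d.1, !d.2)

@[simp] lemma flipD_flipD (d : DEdge Γ) : flipD (flipD d) = d := by
  simp [flipD]

@[simp] lemma dO_flipD (d : DEdge Γ) : Γ.dO (flipD d) = Γ.dT d := by
  obtain ⟨e, _ | _⟩ := d <;> rfl

@[simp] lemma dT_flipD (d : DEdge Γ) : Γ.dT (flipD d) = Γ.dO d := by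
  obtain ⟨e, _ | _⟩ := d <;> rfl

lemma flipD_eq_iff {d d' : DEdge Γ} : flipD d = d' ↔ d = flipD d' := by
  constructor <;> rintro rfl <;> simp

def revPath (p : List (DEdge Γ)) : List (DEdge Γ) := (p.map flipD).reverse

@[simp] lemma revPath_append (p q : List (DEdge Γ)) :
    revPath (p ++ q) = revPath q ++ revPath p := by
  simp [revPath]

@[simp] lemma head?_revPath (p : List (DEdge Γ)) :
    (revPath p).head? = p.getLast?.map flipD := by
  simp [revPath]

@[simp] lemma getLast?_revPath (p : List (DEdge Γ)) :
    (revPath p).getLast? = p.head?.map flipD := by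
  simp [revPath]

@[simp] lemma revPath_eq_nil {p : List (DEdge Γ)} : revPath p = [] ↔ p = [] := by
  simp [revPath]

@[simp] lemma mem_revPath {d : DEdge Γ} {p : List (DEdge Γ)} :
    d ∈ revPath p ↔ flipD d ∈ p := by
  simp [revPath, flipD_eq_iff]

@[simp] lemma isPath_nil {u w : Γ.V} : Γ.IsPath u w [] ↔ u = w := Iff.rfl

@[simp] lemma isPath_cons {u w : Γ.V} {d : DEdge Γ} {p : List (DEdge Γ)} :
    Γ.IsPath u w (d :: p) ↔ Γ.dO d = u ∧ Γ.IsPath (Γ.dT d) w p := Iff.rfl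

lemma isPath_append {u w : Γ.V} {p q : List (DEdge Γ)} :
    Γ.IsPath u w (p ++ q) ↔ ∃ m, Γ.IsPath u m p ∧ Γ.IsPath m w q := by
  induction p generalizing u with
  | nil => simp
  | cons d p ih => simp only [List.cons_append, isPath_cons, ih, and_assoc, exists_and_left]

lemma IsPath.append {u m w : Γ.V} {p q : List (DEdge Γ)} (hp : Γ.IsPath u m p)
    (hq : Γ.IsPath m w q) : Γ.IsPath u w (p ++ q) :=
  isPath_append.2 ⟨m, hp, hq⟩

lemma IsPath.revPath {u w : Γ.V} {p : List (DEdge Γ)} (hp : Γ.IsPath u w p) :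
    Γ.IsPath w u (revPath p) := by
  induction p generalizing u with
  | nil => exact hp.symm
  | cons d p ih =>
    obtain ⟨rfl, hp⟩ := hp
    rw [← List.singleton_append, revPath_append]
    exact (ih hp).append (by simp [XDigraph.revPath])

lemma IsPath.exists_append_eq {u w x : Γ.V} {p : List (DEdge Γ)} (hp : Γ.IsPath u w p)
    {d : DEdge Γ} (hd : d ∈ p) (hx : Γ.dO d = x ∨ Γ.dT d = x) :
    ∃ α β, p = α ++ β ∧ Γ.IsPath u x α ∧ Γ.IsPath x w β := by
  obtain ⟨α, β, rfl⟩ := List.append_of_mem hd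
  obtain ⟨m, hα, rfl, hβ⟩ := isPath_append.1 hp
  rcases hx with rfl | rfl
  · exact ⟨α, d :: β, rfl, hα, rfl, hβ⟩
  · exact ⟨α ++ [d], β, by simp, hα.append (by simp), hβ⟩

lemma reduced_append {p q : List (DEdge Γ)} :
    Γ.Reduced (p ++ q) ↔
      Γ.Reduced p ∧ Γ.Reduced q ∧ ∀ x ∈ p.getLast?, ∀ y ∈ q.head?, y ≠ flipD x :=
  List.isChain_append

lemma Reduced.infix {p q : List (DEdge Γ)} (hq : Γ.Reduced q) (h : p <:+: q) : Γ.Reduced p :=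
  List.IsChain.infix hq h

lemma Reduced.revPath {p : List (DEdge Γ)} (hp : Γ.Reduced p) : Γ.Reduced (revPath p) := by
  refine List.isChain_reverse.2 (List.isChain_map_of_isChain _ ?_ hp)
  intro a b hab hba
  simp only [flipD, Bool.not_not] at hba
  exact hab (by rw [hba])

lemma IsCore.exists_reduced_path {v : Γ.V} (hcore : Γ.IsCore v) (u : Γ.V) :
    ∃ r, Γ.IsPath u v r ∧ Γ.Reduced r := by
  rcases hcore.1 u with rfl | ⟨p, hp, hpr, d, hd, hu⟩
  · exact ⟨[], rfl, List.isChain_nil⟩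
  · obtain ⟨α, β, rfl, hα, -⟩ := hp.exists_append_eq hd hu
    exact ⟨revPath α, hα.revPath, (hpr.infix (List.prefix_append α β).isInfix).revPath⟩

def verts (p : List (DEdge Γ)) : Set Γ.V := {x | ∃ d ∈ p, Γ.dO d = x ∨ Γ.dT d = x}

lemma exists_reduced_path_dO_getLast_notMem (W : Set Γ.V) {u w : Γ.V} {r : List (DEdge Γ)}
    (hr : Γ.IsPath u w r) (hrr : Γ.Reduced r) (hw : w ∈ W) :
    ∃ w ∈ W, ∃ r, Γ.IsPath u w r ∧ Γ.Reduced r ∧ ∀ d ∈ r.getLast?, Γ.dO d ∉ W := by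
  induction r using List.reverseRecOn generalizing w with
  | nil => exact ⟨w, hw, [], hr, hrr, by simp⟩
  | append_singleton r d ih =>
    by_cases hd : Γ.dO d ∈ W
    · obtain ⟨m, hr', rfl, -⟩ := isPath_append.1 hr
      exact ih hr' (hrr.infix (List.prefix_append r [d]).isInfix) hd
    · exact ⟨w, hw, r ++ [d], hr, hrr, by simpa using hd⟩

lemma exists_route {v w : Γ.V} {c : List (DEdge Γ)} (hc : Γ.IsPath v v c)
    (hcc : Γ.Reduced (c ++ c)) (hw : w ∈ verts c) (a : DEdge Γ) :
    ∃ B, Γ.IsPath w v B ∧ Γ.Reduced B ∧ B ≠ [] ∧ B.getLast? ≠ some a ∧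
      ∀ x ∈ B, x ∈ c ∨ flipD x ∈ c := by
  obtain ⟨d, hd, hdw⟩ := hw
  obtain ⟨α, β, rfl, hα, hβ⟩ := hc.exists_append_eq hd hdw
  have hne : α ++ β ≠ [] := List.ne_nil_of_mem hd
  obtain ⟨f, hf⟩ := Option.ne_none_iff_exists'.1 (mt List.head?_eq_none_iff.1 hne)
  obtain ⟨l, hl⟩ := Option.ne_none_iff_exists'.1 (mt List.getLast?_eq_none_iff.1 hne)
  have hfl : f ≠ flipD l := (reduced_append.1 hcc).2.2 l hl f hf
  by_cases hal : a = l
  · refine ⟨revPath (α ++ β ++ α), (hc.append hα).revPath, (hcc.infix ⟨[], β, by simp⟩).revPath,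
      by rw [ne_eq, revPath_eq_nil]; exact fun h => hne (List.append_eq_nil_iff.1 h).1, ?_,
      fun x hx => Or.inr ((List.mem_append.1 (mem_revPath.1 hx)).elim id (List.mem_append_left β))⟩
    rw [getLast?_revPath, List.head?_append_of_ne_nil _ hne, hf, hal]
    intro h
    simp only [Option.map_some, Option.some.injEq] at h
    exact hfl (by rw [← h, flipD_flipD])
  · refine ⟨β ++ (α ++ β), hβ.append hc, hcc.infix ⟨α, [], by simp⟩, by simp [hne], ?_,
      fun x hx => Or.inl ?_⟩
    · rw [List.getLast?_append_of_ne_nil _ hne, hl]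
      exact fun h => hal (Option.some_injective _ h).symm
    · simp only [List.mem_append] at hx ⊢
      tauto

lemma Reduced.append_append_revPath {r M : List (DEdge Γ)} (hr : Γ.Reduced r)
    (hM : Γ.Reduced M) (hMne : M ≠ [])
    (hhead : ∀ d ∈ r.getLast?, ∀ x ∈ M.head?, x ≠ flipD d)
    (hlast : ∀ d ∈ r.getLast?, ∀ x ∈ M.getLast?, x ≠ d) :
    Γ.Reduced (r ++ M ++ XDigraph.revPath r) := by
  refine reduced_append.2 ⟨reduced_append.2 ⟨hr, hM, hhead⟩, hr.revPath, ?_⟩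
  rw [List.getLast?_append_of_ne_nil _ hMne, head?_revPath]
  intro x hx y hy
  obtain ⟨d, hd, rfl⟩ := Option.map_eq_some_iff.1 hy
  exact fun h => hlast d hd x hx (by simpa using congrArg flipD h.symm)

lemma exists_loop_superset {u v w : Γ.V} {c r Q : List (DEdge Γ)} (hc : Γ.IsPath v v c)
    (hcc : Γ.Reduced (c ++ c)) (hw : w ∈ verts c) (hr : Γ.IsPath u w r) (hrr : Γ.Reduced r)
    (hlast : ∀ d ∈ r.getLast?, Γ.dO d ∉ verts c) (hQ : Γ.IsPath v v Q) (hQr : Γ.Reduced Q) :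
    ∃ A, Γ.IsPath u u A ∧ Γ.Reduced A ∧ Q ⊆ A := by
  by_cases hQne : Q = []
  · exact ⟨[], rfl, List.isChain_nil, by simp [hQne]⟩
  obtain ⟨a, ha⟩ := Option.ne_none_iff_exists'.1 (mt List.head?_eq_none_iff.1 hQne)
  obtain ⟨b, hb⟩ := Option.ne_none_iff_exists'.1 (mt List.getLast?_eq_none_iff.1 hQne)
  obtain ⟨B, hB, hBr, hBne, hBa, hBc⟩ := exists_route hc hcc hw (flipD a)
  obtain ⟨C, hC, hCr, hCne, hCb, hCc⟩ := exists_route hc hcc hw b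
  have hoff : ∀ x, (x ∈ c ∨ flipD x ∈ c) → ∀ d ∈ r.getLast?, x ≠ flipD d := by
    rintro x hx d hd rfl
    refine hlast d hd ?_
    rcases hx with h | h
    · exact ⟨flipD d, h, Or.inr (dT_flipD d)⟩
    · exact ⟨d, by simpa using h, Or.inl rfl⟩
  have hBQ : Γ.Reduced (B ++ Q) := by
    refine reduced_append.2 ⟨hBr, hQr, fun x hx y hy => ?_⟩
    rw [ha, Option.mem_some_iff] at hy
    subst hy
    intro h
    exact hBa (by rw [hx, h, flipD_flipD])
  have hM : Γ.Reduced (B ++ Q ++ revPath C) := by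
    refine reduced_append.2 ⟨hBQ, hCr.revPath, fun x hx y hy => ?_⟩
    rw [List.getLast?_append_of_ne_nil _ hQne, hb, Option.mem_some_iff] at hx
    rw [head?_revPath] at hy
    obtain ⟨z, hz, rfl⟩ := Option.map_eq_some_iff.1 hy
    intro h
    exact hCb (by rw [hz, hx]; simpa using congrArg flipD h)
  refine ⟨r ++ (B ++ Q ++ revPath C) ++ revPath r,
    ((hr.append ((hB.append hQ).append hC.revPath)).append hr.revPath),
    hrr.append_append_revPath hM (by simp [hBne]) ?_ ?_, fun x hx => by simp [hx]⟩
  · intro d hd x hx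
    rw [List.append_assoc, List.head?_append_of_ne_nil _ hBne] at hx
    exact hoff x (hBc x (List.mem_of_mem_head? hx)) d hd
  · intro d hd x hx
    rw [List.getLast?_append_of_ne_nil _ (by simp [revPath, hCne]), getLast?_revPath] at hx
    obtain ⟨z, hz, rfl⟩ := Option.map_eq_some_iff.1 hx
    intro h
    exact hoff z (hCc z (List.mem_of_mem_head? hz)) d hd (by rw [← h]; simp)

lemma isCore_of_forall_exists_loop_superset {u v : Γ.V} (hcore : Γ.IsCore v)
    {c : List (DEdge Γ)} (hc : Γ.IsPath v v c) (hcr : Γ.Reduced c) (hne : c ≠ [])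
    (H : ∀ Q, Γ.IsPath v v Q → Γ.Reduced Q → ∃ A, Γ.IsPath u u A ∧ Γ.Reduced A ∧ Q ⊆ A) :
    Γ.IsCore u := by
  refine ⟨fun x => Or.inr ?_, fun e => ?_⟩
  · rcases hcore.1 x with rfl | ⟨Q, hQ, hQr, d, hd, hx⟩
    · obtain ⟨f, c', rfl⟩ := List.exists_cons_of_ne_nil hne
      obtain ⟨A, hA, hAr, hsub⟩ := H _ hc hcr
      exact ⟨A, hA, hAr, f, hsub List.mem_cons_self, Or.inl hc.1⟩
    · obtain ⟨A, hA, hAr, hsub⟩ := H Q hQ hQr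
      exact ⟨A, hA, hAr, d, hsub hd, hx⟩
  · obtain ⟨Q, hQ, hQr, b, hb⟩ := hcore.2 e
    obtain ⟨A, hA, hAr, hsub⟩ := H Q hQ hQr
    exact ⟨A, hA, hAr, b, hsub hb⟩

theorem isCore_of_reduced_append_self {v : Γ.V} (hcore : Γ.IsCore v) {c : List (DEdge Γ)}
    (hc : Γ.IsPath v v c) (hcc : Γ.Reduced (c ++ c)) (hne : c ≠ []) (u : Γ.V) : Γ.IsCore u := by
  obtain ⟨r₀, hr₀, hr₀r⟩ := hcore.exists_reduced_path u
  have hv : v ∈ verts c := by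
    obtain ⟨f, c', rfl⟩ := List.exists_cons_of_ne_nil hne
    exact ⟨f, List.mem_cons_self, Or.inl hc.1⟩
  obtain ⟨w, hw, r, hr, hrr, hlast⟩ := exists_reduced_path_dO_getLast_notMem (verts c) hr₀ hr₀r hv
  exact isCore_of_forall_exists_loop_superset hcore hc
    (hcc.infix (List.prefix_append c c).isInfix) hne
    fun Q hQ hQr => exists_loop_superset hc hcc hw hr hrr hlast hQ hQr

lemma Folded.snd_eq_of_adj (hfold : Γ.Folded) {d d' : DEdge Γ} (hadj : Γ.dT d = Γ.dO d')
    (hback : d' ≠ flipD d) (hlab : Γ.lab d.1 = Γ.lab d'.1) : d.2 = d'.2 := by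
  obtain ⟨e, _ | _⟩ := d <;> obtain ⟨e', _ | _⟩ := d' <;> simp only [dO, dT, flipD] at hadj hback ⊢
  · obtain rfl := hfold.1 e e' hadj hlab
    exact (hback rfl).elim
  · obtain rfl := hfold.2 e e' hadj hlab
    exact (hback rfl).elim

lemma isReduced_map_lab (hfold : Γ.Folded) {u w : Γ.V} {p : List (DEdge Γ)}
    (hp : Γ.IsPath u w p) (hpr : Γ.Reduced p) :
    FreeGroup.IsReduced (p.map fun d => (Γ.lab d.1, d.2)) := by
  induction p generalizing u with
  | nil => exact FreeGroup.IsReduced.nil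
  | cons d p ih =>
    obtain ⟨rfl, hp⟩ := hp
    cases p with
    | nil => exact FreeGroup.IsReduced.singleton
    | cons d' q =>
      obtain ⟨hdd', hpr'⟩ := List.isChain_cons_cons.1 hpr
      exact FreeGroup.isReduced_cons_cons.2 ⟨hfold.snd_eq_of_adj hp.1.symm hdd', ih hp hpr'⟩

lemma toWord_plabel [DecidableEq X] (hfold : Γ.Folded) {u w : Γ.V} {p : List (DEdge Γ)}
    (hp : Γ.IsPath u w p) (hpr : Γ.Reduced p) :
    (Γ.plabel p).toWord = p.map fun d => (Γ.lab d.1, d.2) := by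
  rw [plabel, FreeGroup.toWord_mk, (isReduced_map_lab hfold hp hpr).reduce_eq]

lemma reduced_append_self_of_isCycRed [DecidableEq X] (hfold : Γ.Folded) {u w : Γ.V}
    {p : List (DEdge Γ)} (hp : Γ.IsPath u w p) (hpr : Γ.Reduced p)
    (hcyc : IsCycRed (Γ.plabel p)) : Γ.Reduced (p ++ p) := by
  refine reduced_append.2 ⟨hpr, hpr, fun l hl f hf hfl => ?_⟩
  have hword := toWord_plabel hfold hp hpr
  refine hcyc (Γ.lab f.1, f.2) (by rw [hword, List.head?_map, hf]; rfl) ?_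
  rw [hword, List.getLast?_map, hl, hfl]
  simp [flipD]

end XDigraph

theorem type_eq_of_cyclically_reduced_general {X : Type} [DecidableEq X] (Γ : XDigraph X)
    (v : Γ.V) (hfold : Γ.Folded) (hcore : Γ.IsCore v)
    (g : FreeGroup X) (hg : g ∈ Γ.LSet v) (hg1 : g ≠ 1) (hgc : IsCycRed g) :
    ∀ u : Γ.V, Γ.IsCore u := by
  obtain ⟨p, hp, hpr, rfl⟩ := hg
  have hne : p ≠ [] := by
    rintro rfl
    exact hg1 rfl
  exact XDigraph.isCore_of_reduced_append_self hcore hp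
    (XDigraph.reduced_append_self_of_isCycRed hfold hp hpr hgc) hne

/-- If `Γ` is a finite folded `X`-digraph, core with respect to `v`, and
`L(Γ, v)` contains a nontrivial cyclically reduced element, then `Type(Γ) = Γ`, i.e.
`Γ` is core with respect to every vertex `u`. -/
theorem type_eq_of_cyclically_reduced {X : Type} [DecidableEq X] (Γ : XDigraph X)
    [Finite Γ.V] [Finite Γ.E] (v : Γ.V) (hfold : Γ.Folded) (hcore : Γ.IsCore v)
    (g : FreeGroup X) (hg : g ∈ Γ.LSet v) (hg1 : g ≠ 1) (hgc : IsCycRed g) :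
    ∀ u : Γ.V, Γ.IsCore u :=
  type_eq_of_cyclically_reduced_general Γ v hfold hcore g hg hg1 hgc
end
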